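/- arXiv:math/0410077 — 11 statements merged into one kernel-verified Lean document; each statement's English description precedes it below -/
import Mathlib

section
/- In the algebra A(S^7_{θ'}) with deformation parameters λ'^{12} = λ'^{34} = 1 and λ'^{13} = λ'^{14} = λ'^{23} = λ'^{24} = μ where μ² = λ, the elements α = 2(z^1 z̄^3 + z^2 z̄^4), β = 2(−z^1 z^4 + z^2 z^3), and x = z^1 z̄^1 + z^2 z̄^2 − z^3 z̄^3 − z^4 z̄^4 satisfy the relations α β = λ β α, α β* = λ̄ β* α, α α* = α* α, β β* = β* β, x is central and self-adjoint, and α α* + β β* + x² = 1. -/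
noncomputable section

/-- The deformation matrix λ'^{ij} of the sphere S^7_{θ'}: λ'^{12}=λ'^{34}=1 and
λ'^{13}=λ'^{14}=λ'^{23}=λ'^{24}=μ (indices 0-based), with λ'^{ji} = (λ'^{ij})⁻¹. -/
def lam7 (μ : ℂ) (i j : Fin 4) : ℂ :=
  if ((i : ℕ) < 2 ∧ (j : ℕ) < 2) ∨ (2 ≤ (i : ℕ) ∧ 2 ≤ (j : ℕ)) then 1
  else if (i : ℕ) < 2 then μ else μ⁻¹

variable {A : Type} [Ring A] [Algebra ℂ A] [StarRing A] [StarModule ℂ A]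

/-- The defining relations of A(S^7_{θ'}): commutation relations among the generators and
their adjoints, and the sphere relation Σ_i z^i z̄^i = 1. -/
def S7Rel (μ : ℂ) (z : Fin 4 → A) : Prop :=
  (∀ i j, z i * z j = lam7 μ i j • (z j * z i)) ∧
  (∀ i j, star (z i) * z j = lam7 μ j i • (z j * star (z i))) ∧
  (∀ i j, star (z i) * star (z j) = lam7 μ i j • (star (z j) * star (z i))) ∧
  (∑ i, z i * star (z i)) = 1

/-- α = 2(z^1 z̄^3 + z^2 z̄^4). -/
def elA (z : Fin 4 → A) : A := 2 * (z 0 * star (z 2) + z 1 * star (z 3))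

/-- β = 2(−z^1 z^4 + z^2 z^3). -/
def elB (z : Fin 4 → A) : A := 2 * (-(z 0 * z 3) + z 1 * z 2)

/-- x = z^1 z̄^1 + z^2 z̄^2 − z^3 z̄^3 − z^4 z̄^4. -/
def elX (z : Fin 4 → A) : A :=
  z 0 * star (z 0) + z 1 * star (z 1) - z 2 * star (z 2) - z 3 * star (z 3)

/-- |ψ_1⟩ = (z^1, −z̄^2, z^3, −z̄^4)^t. -/
def psi1 (z : Fin 4 → A) : Fin 4 → A := ![z 0, -star (z 1), z 2, -star (z 3)]

/-- |ψ_2⟩ = (z^2, z̄^1, z^4, z̄^3)^t. -/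
def psi2 (z : Fin 4 → A) : Fin 4 → A := ![z 1, star (z 0), z 3, star (z 2)]

/-- The projection p = |ψ_1⟩⟨ψ_1| + |ψ_2⟩⟨ψ_2| as a 4×4 matrix. -/
def projP (z : Fin 4 → A) : Matrix (Fin 4) (Fin 4) A :=
  fun i j => psi1 z i * star (psi1 z j) + psi2 z i * star (psi2 z j)

private theorem mulSwapS {A : Type} [Ring A] [Algebra ℂ A] {x y : A} {k : ℂ}
    (h : x * y = k • (y * x)) (t : A) : x * (y * t) = k • (y * (x * t)) := by
  rw [← mul_assoc, h, smul_mul_assoc, mul_assoc]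

private theorem mulSwapP {A : Type} [Ring A] {x y : A}
    (h : x * y = y * x) (t : A) : x * (y * t) = y * (x * t) := by
  rw [← mul_assoc, h, mul_assoc]

set_option maxHeartbeats 1600000 in
/-- In A(S^7_{θ'}) with μ² = λ, the elements α, β, x satisfy αβ = λβα,
αβ* = λ̄β*α, αα* = α*α, ββ* = β*β, x is central and self-adjoint, and αα* + ββ* + x² = 1. -/
theorem stmt3 (θ : ℝ) (lam μ : ℂ) (hlam : lam = Complex.exp (2 * Real.pi * Complex.I * θ))
    (hμ : μ ^ 2 = lam) (z : Fin 4 → A) (hrel : S7Rel μ z)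
    (hgen : StarAlgebra.adjoin ℂ (Set.range z) = ⊤) :
    elA z * elB z = lam • (elB z * elA z) ∧
    elA z * star (elB z) = (star lam) • (star (elB z) * elA z) ∧
    elA z * star (elA z) = star (elA z) * elA z ∧
    elB z * star (elB z) = star (elB z) * elB z ∧
    star (elX z) = elX z ∧
    elX z ∈ Set.center A ∧
    elA z * star (elA z) + elB z * star (elB z) + elX z ^ 2 = 1 := by
  obtain ⟨h1, h2, h3, h4⟩ := hrel
  have hlam0 : lam ≠ 0 := by rw [hlam]; exact Complex.exp_ne_zero _
  have hμ0 : μ ≠ 0 := by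
    intro h; apply hlam0; rw [← hμ, h]; ring
  have hA2 : ∀ x : A, (2 : A) * x = (2 : ℂ) • x := fun x => by
    rw [Algebra.smul_def, map_ofNat]
  have hB2 : ∀ x : A, x * (2 : A) = (2 : ℂ) • x := fun x => by
    rw [← hA2]; exact (Commute.ofNat_right x 2).eq
  have hsl : star lam = μ⁻¹ * μ⁻¹ := by
    have h1' : star lam = lam⁻¹ := by
      rw [hlam, Complex.star_def, ← Complex.exp_conj, ← Complex.exp_neg]
      congr 1
      simp [map_mul, Complex.conj_ofReal, map_ofNat]
    rw [h1', ← hμ, pow_two, mul_inv]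
  have l00 : lam7 μ 0 0 = 1 := rfl
  have l01 : lam7 μ 0 1 = 1 := rfl
  have l02 : lam7 μ 0 2 = μ := rfl
  have l03 : lam7 μ 0 3 = μ := rfl
  have l10 : lam7 μ 1 0 = 1 := rfl
  have l11 : lam7 μ 1 1 = 1 := rfl
  have l12 : lam7 μ 1 2 = μ := rfl
  have l13 : lam7 μ 1 3 = μ := rfl
  have l20 : lam7 μ 2 0 = μ⁻¹ := rfl
  have l21 : lam7 μ 2 1 = μ⁻¹ := rfl
  have l22 : lam7 μ 2 2 = 1 := rfl
  have l23 : lam7 μ 2 3 = 1 := rfl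
  have l30 : lam7 μ 3 0 = μ⁻¹ := rfl
  have l31 : lam7 μ 3 1 = μ⁻¹ := rfl
  have l32 : lam7 μ 3 2 = 1 := rfl
  have l33 : lam7 μ 3 3 = 1 := rfl
  have sw10 : star (z 0) * (z 0) = z 0 * (star (z 0)) := by rw [h2 0 0, l00, one_smul]
  have sw20 : z 1 * (z 0) = z 0 * (z 1) := by rw [h1 1 0, l10, one_smul]
  have sw21 : z 1 * (star (z 0)) = star (z 0) * (z 1) := by rw [h2 0 1, l10, one_smul]
  have sw30 : star (z 1) * (z 0) = z 0 * (star (z 1)) := by rw [h2 1 0, l01, one_smul]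
  have sw31 : star (z 1) * (star (z 0)) = star (z 0) * (star (z 1)) := by rw [h3 1 0, l10, one_smul]
  have sw32 : star (z 1) * (z 1) = z 1 * (star (z 1)) := by rw [h2 1 1, l11, one_smul]
  have sw40 : z 2 * (z 0) = μ⁻¹ • (z 0 * (z 2)) := by rw [h1 2 0, l20]
  have sw41 : z 2 * (star (z 0)) = μ • (star (z 0) * (z 2)) := by rw [h2 0 2, l20, smul_smul, mul_inv_cancel₀ hμ0, one_smul]
  have sw42 : z 2 * (z 1) = μ⁻¹ • (z 1 * (z 2)) := by rw [h1 2 1, l21]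
  have sw43 : z 2 * (star (z 1)) = μ • (star (z 1) * (z 2)) := by rw [h2 1 2, l21, smul_smul, mul_inv_cancel₀ hμ0, one_smul]
  have sw50 : star (z 2) * (z 0) = μ • (z 0 * (star (z 2))) := by rw [h2 2 0, l02]
  have sw51 : star (z 2) * (star (z 0)) = μ⁻¹ • (star (z 0) * (star (z 2))) := by rw [h3 2 0, l20]
  have sw52 : star (z 2) * (z 1) = μ • (z 1 * (star (z 2))) := by rw [h2 2 1, l12]
  have sw53 : star (z 2) * (star (z 1)) = μ⁻¹ • (star (z 1) * (star (z 2))) := by rw [h3 2 1, l21]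
  have sw54 : star (z 2) * (z 2) = z 2 * (star (z 2)) := by rw [h2 2 2, l22, one_smul]
  have sw60 : z 3 * (z 0) = μ⁻¹ • (z 0 * (z 3)) := by rw [h1 3 0, l30]
  have sw61 : z 3 * (star (z 0)) = μ • (star (z 0) * (z 3)) := by rw [h2 0 3, l30, smul_smul, mul_inv_cancel₀ hμ0, one_smul]
  have sw62 : z 3 * (z 1) = μ⁻¹ • (z 1 * (z 3)) := by rw [h1 3 1, l31]
  have sw63 : z 3 * (star (z 1)) = μ • (star (z 1) * (z 3)) := by rw [h2 1 3, l31, smul_smul, mul_inv_cancel₀ hμ0, one_smul]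
  have sw64 : z 3 * (z 2) = z 2 * (z 3) := by rw [h1 3 2, l32, one_smul]
  have sw65 : z 3 * (star (z 2)) = star (z 2) * (z 3) := by rw [h2 2 3, l32, one_smul]
  have sw70 : star (z 3) * (z 0) = μ • (z 0 * (star (z 3))) := by rw [h2 3 0, l03]
  have sw71 : star (z 3) * (star (z 0)) = μ⁻¹ • (star (z 0) * (star (z 3))) := by rw [h3 3 0, l30]
  have sw72 : star (z 3) * (z 1) = μ • (z 1 * (star (z 3))) := by rw [h2 3 1, l13]
  have sw73 : star (z 3) * (star (z 1)) = μ⁻¹ • (star (z 1) * (star (z 3))) := by rw [h3 3 1, l31]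
  have sw74 : star (z 3) * (z 2) = z 2 * (star (z 3)) := by rw [h2 3 2, l23, one_smul]
  have sw75 : star (z 3) * (star (z 2)) = star (z 2) * (star (z 3)) := by rw [h3 3 2, l32, one_smul]
  have sw76 : star (z 3) * (z 3) = z 3 * (star (z 3)) := by rw [h2 3 3, l33, one_smul]
  have esw10 := mulSwapP sw10
  have esw20 := mulSwapP sw20
  have esw21 := mulSwapP sw21
  have esw30 := mulSwapP sw30
  have esw31 := mulSwapP sw31
  have esw32 := mulSwapP sw32
  have esw40 := mulSwapS sw40
  have esw41 := mulSwapS sw41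
  have esw42 := mulSwapS sw42
  have esw43 := mulSwapS sw43
  have esw50 := mulSwapS sw50
  have esw51 := mulSwapS sw51
  have esw52 := mulSwapS sw52
  have esw53 := mulSwapS sw53
  have esw54 := mulSwapP sw54
  have esw60 := mulSwapS sw60
  have esw61 := mulSwapS sw61
  have esw62 := mulSwapS sw62
  have esw63 := mulSwapS sw63
  have esw64 := mulSwapP sw64
  have esw65 := mulSwapP sw65
  have esw70 := mulSwapS sw70
  have esw71 := mulSwapS sw71
  have esw72 := mulSwapS sw72
  have esw73 := mulSwapS sw73
  have esw74 := mulSwapP sw74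
  have esw75 := mulSwapP sw75
  have esw76 := mulSwapP sw76
  have hxstar : star (elX z) = elX z := by
    simp only [elX, star_sub, star_add, star_mul, star_star]
  refine ⟨?_, ?_, ?_, ?_, hxstar, ?_, ?_⟩
  · rw [← hμ, pow_two]
    simp only [elA, elB, elX, pow_two, Fin.sum_univ_four, sw10, sw20, sw21, sw30, sw31, sw32, sw40, sw41, sw42, sw43, sw50, sw51, sw52, sw53, sw54, sw60, sw61, sw62, sw63, sw64, sw65, sw70, sw71, sw72, sw73, sw74, sw75, sw76, esw10, esw20, esw21, esw30, esw31, esw32, esw40, esw41, esw42, esw43, esw50, esw51, esw52, esw53, esw54, esw60, esw61, esw62, esw63, esw64, esw65, esw70, esw71, esw72, esw73, esw74, esw75, esw76, mul_assoc, mul_add, add_mul, mul_sub, sub_mul, neg_mul, mul_neg, neg_neg, mul_one, one_mul, smul_add, smul_neg, smul_smul, one_smul, smul_mul_assoc, mul_smul_comm, star_add, star_mul, star_neg, star_sub, star_star, star_smul, star_ofNat, hA2, hB2]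
    match_scalars <;> field_simp <;> try ring
  · rw [hsl]
    simp only [elA, elB, elX, pow_two, Fin.sum_univ_four, sw10, sw20, sw21, sw30, sw31, sw32, sw40, sw41, sw42, sw43, sw50, sw51, sw52, sw53, sw54, sw60, sw61, sw62, sw63, sw64, sw65, sw70, sw71, sw72, sw73, sw74, sw75, sw76, esw10, esw20, esw21, esw30, esw31, esw32, esw40, esw41, esw42, esw43, esw50, esw51, esw52, esw53, esw54, esw60, esw61, esw62, esw63, esw64, esw65, esw70, esw71, esw72, esw73, esw74, esw75, esw76, mul_assoc, mul_add, add_mul, mul_sub, sub_mul, neg_mul, mul_neg, neg_neg, mul_one, one_mul, smul_add, smul_neg, smul_smul, one_smul, smul_mul_assoc, mul_smul_comm, star_add, star_mul, star_neg, star_sub, star_star, star_smul, star_ofNat, hA2, hB2]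
    match_scalars <;> field_simp <;> try ring
  · simp only [elA, elB, elX, pow_two, Fin.sum_univ_four, sw10, sw20, sw21, sw30, sw31, sw32, sw40, sw41, sw42, sw43, sw50, sw51, sw52, sw53, sw54, sw60, sw61, sw62, sw63, sw64, sw65, sw70, sw71, sw72, sw73, sw74, sw75, sw76, esw10, esw20, esw21, esw30, esw31, esw32, esw40, esw41, esw42, esw43, esw50, esw51, esw52, esw53, esw54, esw60, esw61, esw62, esw63, esw64, esw65, esw70, esw71, esw72, esw73, esw74, esw75, esw76, mul_assoc, mul_add, add_mul, mul_sub, sub_mul, neg_mul, mul_neg, neg_neg, mul_one, one_mul, smul_add, smul_neg, smul_smul, one_smul, smul_mul_assoc, mul_smul_comm, star_add, star_mul, star_neg, star_sub, star_star, star_smul, star_ofNat, hA2, hB2]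
    match_scalars <;> field_simp <;> try ring
  · simp only [elA, elB, elX, pow_two, Fin.sum_univ_four, sw10, sw20, sw21, sw30, sw31, sw32, sw40, sw41, sw42, sw43, sw50, sw51, sw52, sw53, sw54, sw60, sw61, sw62, sw63, sw64, sw65, sw70, sw71, sw72, sw73, sw74, sw75, sw76, esw10, esw20, esw21, esw30, esw31, esw32, esw40, esw41, esw42, esw43, esw50, esw51, esw52, esw53, esw54, esw60, esw61, esw62, esw63, esw64, esw65, esw70, esw71, esw72, esw73, esw74, esw75, esw76, mul_assoc, mul_add, add_mul, mul_sub, sub_mul, neg_mul, mul_neg, neg_neg, mul_one, one_mul, smul_add, smul_neg, smul_smul, one_smul, smul_mul_assoc, mul_smul_comm, star_add, star_mul, star_neg, star_sub, star_star, star_smul, star_ofNat, hA2, hB2]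
    match_scalars <;> field_simp <;> try ring
  · have hc0 : elX z * z 0 = z 0 * elX z := by
      simp only [elA, elB, elX, pow_two, Fin.sum_univ_four, sw10, sw20, sw21, sw30, sw31, sw32, sw40, sw41, sw42, sw43, sw50, sw51, sw52, sw53, sw54, sw60, sw61, sw62, sw63, sw64, sw65, sw70, sw71, sw72, sw73, sw74, sw75, sw76, esw10, esw20, esw21, esw30, esw31, esw32, esw40, esw41, esw42, esw43, esw50, esw51, esw52, esw53, esw54, esw60, esw61, esw62, esw63, esw64, esw65, esw70, esw71, esw72, esw73, esw74, esw75, esw76, mul_assoc, mul_add, add_mul, mul_sub, sub_mul, neg_mul, mul_neg, neg_neg, mul_one, one_mul, smul_add, smul_neg, smul_smul, one_smul, smul_mul_assoc, mul_smul_comm, star_add, star_mul, star_neg, star_sub, star_star, star_smul, star_ofNat, hA2, hB2]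
      match_scalars <;> field_simp <;> try ring
    have hc1 : elX z * z 1 = z 1 * elX z := by
      simp only [elA, elB, elX, pow_two, Fin.sum_univ_four, sw10, sw20, sw21, sw30, sw31, sw32, sw40, sw41, sw42, sw43, sw50, sw51, sw52, sw53, sw54, sw60, sw61, sw62, sw63, sw64, sw65, sw70, sw71, sw72, sw73, sw74, sw75, sw76, esw10, esw20, esw21, esw30, esw31, esw32, esw40, esw41, esw42, esw43, esw50, esw51, esw52, esw53, esw54, esw60, esw61, esw62, esw63, esw64, esw65, esw70, esw71, esw72, esw73, esw74, esw75, esw76, mul_assoc, mul_add, add_mul, mul_sub, sub_mul, neg_mul, mul_neg, neg_neg, mul_one, one_mul, smul_add, smul_neg, smul_smul, one_smul, smul_mul_assoc, mul_smul_comm, star_add, star_mul, star_neg, star_sub, star_star, star_smul, star_ofNat, hA2, hB2]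
      match_scalars <;> field_simp <;> try ring
    have hc2 : elX z * z 2 = z 2 * elX z := by
      simp only [elA, elB, elX, pow_two, Fin.sum_univ_four, sw10, sw20, sw21, sw30, sw31, sw32, sw40, sw41, sw42, sw43, sw50, sw51, sw52, sw53, sw54, sw60, sw61, sw62, sw63, sw64, sw65, sw70, sw71, sw72, sw73, sw74, sw75, sw76, esw10, esw20, esw21, esw30, esw31, esw32, esw40, esw41, esw42, esw43, esw50, esw51, esw52, esw53, esw54, esw60, esw61, esw62, esw63, esw64, esw65, esw70, esw71, esw72, esw73, esw74, esw75, esw76, mul_assoc, mul_add, add_mul, mul_sub, sub_mul, neg_mul, mul_neg, neg_neg, mul_one, one_mul, smul_add, smul_neg, smul_smul, one_smul, smul_mul_assoc, mul_smul_comm, star_add, star_mul, star_neg, star_sub, star_star, star_smul, star_ofNat, hA2, hB2]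
      match_scalars <;> field_simp <;> try ring
    have hc3 : elX z * z 3 = z 3 * elX z := by
      simp only [elA, elB, elX, pow_two, Fin.sum_univ_four, sw10, sw20, sw21, sw30, sw31, sw32, sw40, sw41, sw42, sw43, sw50, sw51, sw52, sw53, sw54, sw60, sw61, sw62, sw63, sw64, sw65, sw70, sw71, sw72, sw73, sw74, sw75, sw76, esw10, esw20, esw21, esw30, esw31, esw32, esw40, esw41, esw42, esw43, esw50, esw51, esw52, esw53, esw54, esw60, esw61, esw62, esw63, esw64, esw65, esw70, esw71, esw72, esw73, esw74, esw75, esw76, mul_assoc, mul_add, add_mul, mul_sub, sub_mul, neg_mul, mul_neg, neg_neg, mul_one, one_mul, smul_add, smul_neg, smul_smul, one_smul, smul_mul_assoc, mul_smul_comm, star_add, star_mul, star_neg, star_sub, star_star, star_smul, star_ofNat, hA2, hB2]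
      match_scalars <;> field_simp <;> try ring
    have hc : ∀ i : Fin 4, elX z * z i = z i * elX z := by
      intro i; fin_cases i; exacts [hc0, hc1, hc2, hc3]
    rw [Semigroup.mem_center_iff]
    intro g
    have hsub : StarAlgebra.adjoin ℂ (Set.range z) ≤ StarSubalgebra.centralizer ℂ {elX z} := by
      apply StarAlgebra.adjoin_le
      rintro _ ⟨i, rfl⟩
      rw [SetLike.mem_coe, StarSubalgebra.mem_centralizer_iff]
      rintro g hg
      rw [Set.mem_singleton_iff] at hg
      subst hg
      rw [hxstar]
      exact ⟨hc i, hc i⟩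
    have hgmem : g ∈ StarSubalgebra.centralizer ℂ {elX z} := by
      apply hsub
      rw [hgen]
      exact StarSubalgebra.mem_top
    exact ((StarSubalgebra.mem_centralizer_iff ℂ).mp hgmem (elX z) rfl).1.symm
  · have key : elA z * star (elA z) + elB z * star (elB z) + elX z ^ 2
        = (∑ i, z i * star (z i)) * (∑ i, z i * star (z i)) := by
      simp only [elA, elB, elX, pow_two, Fin.sum_univ_four, sw10, sw20, sw21, sw30, sw31, sw32, sw40, sw41, sw42, sw43, sw50, sw51, sw52, sw53, sw54, sw60, sw61, sw62, sw63, sw64, sw65, sw70, sw71, sw72, sw73, sw74, sw75, sw76, esw10, esw20, esw21, esw30, esw31, esw32, esw40, esw41, esw42, esw43, esw50, esw51, esw52, esw53, esw54, esw60, esw61, esw62, esw63, esw64, esw65, esw70, esw71, esw72, esw73, esw74, esw75, esw76, mul_assoc, mul_add, add_mul, mul_sub, sub_mul, neg_mul, mul_neg, neg_neg, mul_one, one_mul, smul_add, smul_neg, smul_smul, one_smul, smul_mul_assoc, mul_smul_comm, star_add, star_mul, star_neg, star_sub, star_star, star_smul, star_ofNat, hA2, hB2]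
      match_scalars <;> field_simp <;> try ring
    rw [key, h4, mul_one]
end
end

section
/- Requiring that the map α_w sending (z^1, z^2, z^3, z^4) to (z^1 w^1 − z^2 w̄^2, z^1 w^2 + z^2 w̄^1, z^3 w^1 − z^4 w̄^2, z^3 w^2 + z^4 w̄^1) defines a *-algebra automorphism of A(S^7_{θ'}) for every w = (w^1, w^2) ∈ SU(2) forces the deformation parameters to satisfy λ'^{12} = λ'^{34} = 1 and λ'^{13} = λ'^{14} = λ'^{23} = λ'^{24}. -/
/-!
Take `w = (3/5, 4/5)`. For indices `i₀ ≠ j₀`, put `(3/5) S` at `i₀`, `(4/5) C` at `j₀` and `0`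
elsewhere, where `S` and `C` are the shift and clock unitaries on `ℓ²(ℤ)` with `S C = q C S` and
`q = λ'^{i₀ j₀}`. This family satisfies the defining relations, so the universal property gives a
`*`-homomorphism `g` out of `A`. Under `g ∘ α_w` each of `z i`, `z j` goes to a nonzero multiple of
`S` or of `C`, so the relation `z i z j = λ'^{ij} z j z i` says that two unitaries `X`, `Y` satisfy
`X Y = λ'^{ij} Y X`. Since `Y X` is invertible, `λ'^{ij}` is then determined by the model.
With `(i₀, j₀) = (0, 2)` this gives `λ'^{01} = λ'^{23} = 1`. With `(0, 3)`, `(1, 2)` and `(1, 3)` it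
gives `λ'^{02} = λ'^{03} = λ'^{12} = λ'^{13}`.
-/

open scoped ENNReal

namespace lp

variable {ι : Type*}

instance instNontrivial {E : ι → Type*} [∀ i, NormedAddCommGroup (E i)] {p : ℝ≥0∞} [Fact (1 ≤ p)]
    [Nonempty ι] [∀ i, Nontrivial (E i)] : Nontrivial (lp E p) := by
  classical
  obtain ⟨i⟩ := ‹Nonempty ι›
  obtain ⟨x, hx⟩ := exists_ne (0 : E i)
  exact ⟨lp.single p i x, 0, fun h => hx (by simpa using congr($h i))⟩

variable (σ : ι ≃ ι) {c : ι → ℂ} (hc : ∀ i, ‖c i‖ = 1)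
include hc

theorem memℓp_weightedComp (f : lp (fun _ : ι => ℂ) 2) :
    Memℓp (fun i => c i * f (σ i)) 2 := by
  have hf := (memℓp_gen_iff (p := 2) (by norm_num)).1 f.2
  rw [memℓp_gen_iff (by norm_num)]
  simpa [Function.comp_def, hc] using σ.summable_iff.2 hf

noncomputable def weightedComp : lp (fun _ : ι => ℂ) 2 →ₗᵢ[ℂ] lp (fun _ : ι => ℂ) 2 where
  toFun f := ⟨_, memℓp_weightedComp σ hc f⟩
  map_add' f g := lp.ext <| funext fun _ => mul_add _ _ _
  map_smul' a f := lp.ext <| funext fun _ => mul_left_comm _ _ _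
  norm_map' f := by
    have hp : 0 < (2 : ℝ≥0∞).toReal := by norm_num
    rw [lp.norm_eq_tsum_rpow hp, lp.norm_eq_tsum_rpow hp]
    congr 1
    simpa [hc] using σ.tsum_eq fun i => ‖f i‖ ^ (2 : ℝ≥0∞).toReal

@[simp]
theorem weightedComp_apply (f : lp (fun _ : ι => ℂ) 2) (i : ι) :
    weightedComp σ hc f i = c i * f (σ i) := rfl

theorem weightedComp_surjective : Function.Surjective (weightedComp σ hc) := by
  intro g
  have hc' : ∀ i, ‖(c (σ.symm i))⁻¹‖ = 1 := by simp [hc]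
  refine ⟨weightedComp σ.symm hc' g, ?_⟩
  ext i
  have : c i ≠ 0 := norm_ne_zero_iff.1 (by simp [hc])
  simp [this]

noncomputable def weightedCompEquiv : lp (fun _ : ι => ℂ) 2 ≃ₗᵢ[ℂ] lp (fun _ : ι => ℂ) 2 :=
  .ofSurjective (weightedComp σ hc) (weightedComp_surjective σ hc)

theorem weightedCompEquiv_mem_unitary :
    (weightedCompEquiv σ hc : lp (fun _ : ι => ℂ) 2 →L[ℂ] lp (fun _ : ι => ℂ) 2) ∈
      unitary (lp (fun _ : ι => ℂ) 2 →L[ℂ] lp (fun _ : ι => ℂ) 2) :=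
  (Unitary.linearIsometryEquiv.symm (weightedCompEquiv σ hc)).2

end lp

theorem mul_ne_zero_of_mem_unitary {R : Type*} [Ring R] [StarRing R] [Nontrivial R] {u v : R}
    (hu : u ∈ unitary R) (hv : v ∈ unitary R) : u * v ≠ 0 :=
  (Unitary.isUnit_coe (U := ⟨u * v, mul_mem hu hv⟩)).ne_zero

def QCommute {K B : Type*} [Mul B] [SMul K B] (q : K) (x y : B) : Prop := x * y = q • (y * x)

namespace QCommute

variable {K B : Type*} [Field K] [Ring B] [Algebra K B] {q c : K} {x y : B}

@[simp] theorem zero_left (q : K) (y : B) : QCommute q 0 y := by simp [QCommute]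

@[simp] theorem zero_right (q : K) (x : B) : QCommute q x 0 := by simp [QCommute]

@[simp] theorem self (x : B) : QCommute (1 : K) x x := by rw [QCommute, one_smul]

theorem one_of_commute (h : Commute x y) : QCommute (1 : K) x y := by
  rw [QCommute, one_smul, h.eq]

theorem smul (h : QCommute q x y) (a b : K) : QCommute q (a • x) (b • y) := by
  rw [QCommute, smul_mul_smul_comm, smul_mul_smul_comm, h, smul_smul, smul_smul, mul_comm a b,
    mul_comm]

@[simp] theorem smul_left_iff {a : K} (ha : a ≠ 0) : QCommute q (a • x) y ↔ QCommute q x y := by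
  simp only [QCommute, smul_mul_assoc, mul_smul_comm, smul_comm q a,
    (smul_right_injective B ha).eq_iff]

@[simp] theorem smul_right_iff {a : K} (ha : a ≠ 0) : QCommute q x (a • y) ↔ QCommute q x y := by
  simp only [QCommute, smul_mul_assoc, mul_smul_comm, smul_comm q a,
    (smul_right_injective B ha).eq_iff]

@[simp] theorem neg_left_iff : QCommute q (-x) y ↔ QCommute q x y := by
  simp [QCommute]

@[simp] theorem neg_right_iff : QCommute q x (-y) ↔ QCommute q x y := by
  simp [QCommute]

theorem symm (hq : q ≠ 0) (h : QCommute q x y) : QCommute q⁻¹ y x := by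
  rw [QCommute, h, smul_smul, inv_mul_cancel₀ hq, one_smul]

theorem star_left [StarRing B] (hx : x ∈ unitary B) (hq : q ≠ 0) (h : QCommute q x y) :
    QCommute q⁻¹ (star x) y :=
  calc star x * y = star x * (y * x) * star x := by
        rw [mul_assoc, mul_assoc, Unitary.mul_star_self_of_mem hx, mul_one]
    _ = q⁻¹ • (star x * x * y * star x) := by
        rw [h.symm hq, mul_smul_comm, smul_mul_assoc]
        simp only [mul_assoc]
    _ = q⁻¹ • (y * star x) := by rw [Unitary.star_mul_self_of_mem hx, one_mul]

theorem map {A F : Type*} [Ring A] [Algebra K A] [FunLike F A B] [AlgHomClass F K A B] (φ : F)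
    {x y : A} (h : QCommute q x y) : QCommute q (φ x) (φ y) := by
  rw [QCommute, ← map_mul, h, map_smul, map_mul]

theorem unique (hc : QCommute c x y) (hq : QCommute q x y) (hyx : y * x ≠ 0) : c = q := by
  rw [QCommute, hc] at hq
  exact smul_left_injective K hyx hq

theorem eq_one_of_mem_unitary [StarRing B] [Nontrivial B] (hx : x ∈ unitary B)
    (h : QCommute c x x) : c = 1 :=
  h.unique (.self x) (mul_ne_zero_of_mem_unitary hx hx)

end QCommute

local notation "𝔹" => lp (fun _ : ℤ => ℂ) 2 →L[ℂ] lp (fun _ : ℤ => ℂ) 2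

noncomputable def weylShift : 𝔹 :=
  lp.weightedCompEquiv (Equiv.addRight (1 : ℤ)) (c := 1) (fun _ => by simp)

noncomputable def weylClock {q : ℂ} (hq : ‖q‖ = 1) : 𝔹 :=
  lp.weightedCompEquiv (Equiv.refl ℤ) (c := fun n => q ^ n) (fun _ => by simp [hq])

theorem weylShift_mem_unitary : weylShift ∈ unitary 𝔹 := lp.weightedCompEquiv_mem_unitary _ _

theorem weylClock_mem_unitary {q : ℂ} (hq : ‖q‖ = 1) : weylClock hq ∈ unitary 𝔹 :=
  lp.weightedCompEquiv_mem_unitary _ _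

theorem qCommute_weylShift_weylClock {q : ℂ} (hq : ‖q‖ = 1) :
    QCommute q weylShift (weylClock hq) := by
  have hq0 : q ≠ 0 := norm_ne_zero_iff.1 (by simp [hq])
  ext f n
  simp [weylShift, weylClock, lp.weightedCompEquiv, zpow_add₀ hq0]
  ring

theorem eq_of_qCommute_weylShift_weylClock {c q : ℂ} (hq : ‖q‖ = 1)
    (h : QCommute c weylShift (weylClock hq)) : c = q :=
  h.unique (qCommute_weylShift_weylClock hq)
    (mul_ne_zero_of_mem_unitary (weylClock_mem_unitary hq) weylShift_mem_unitary)

structure IsSphereFamily {ι B : Type*} [Fintype ι] [Ring B] [Algebra ℂ B] [StarRing B]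
    (lam : ι → ι → ℂ) (v : ι → B) : Prop where
  comm : ∀ i j, QCommute (lam i j) (v i) (v j)
  star_comm : ∀ i j, QCommute (lam j i) (star (v i)) (v j)
  star_star_comm : ∀ i j, QCommute (lam i j) (star (v i)) (star (v j))
  sum_mul_star : ∑ i, v i * star (v i) = 1

theorem isSphereFamily_pair {ι B : Type*} [Fintype ι] [DecidableEq ι] [Ring B] [Algebra ℂ B]
    [StarRing B] [StarModule ℂ B] {lam : ι → ι → ℂ} {i₀ j₀ : ι} (hne : i₀ ≠ j₀)
    (hinv : lam j₀ i₀ = (lam i₀ j₀)⁻¹) (hdiag₀ : lam i₀ i₀ = 1) (hdiag₁ : lam j₀ j₀ = 1)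
    (hq : lam i₀ j₀ ≠ 0) {u v : B} (hu : u ∈ unitary B) (hv : v ∈ unitary B)
    (huv : QCommute (lam i₀ j₀) u v) {a b : ℂ}
    (hab : Complex.normSq a + Complex.normSq b = 1) :
    IsSphereFamily lam (Pi.single i₀ (a • u) + Pi.single j₀ (b • v) : ι → B) := by
  set x : ι → B := Pi.single i₀ (a • u) + Pi.single j₀ (b • v)
  have hx₀ : x i₀ = a • u := by simp [x, hne.symm]
  have hx₁ : x j₀ = b • v := by simp [x, hne]
  have hx : ∀ k, i₀ = k ∨ j₀ = k ∨ x k = 0 := fun k => by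
    by_cases h₀ : i₀ = k <;> by_cases h₁ : j₀ = k <;> simp [x, *, Ne.symm]
  -- Since `u`, `v` are unitary, `u v = q v u` yields all twisted relations among `u, v, u⋆, v⋆`.
  have hvu := huv.symm hq
  have hsu := huv.star_left hu hq
  have hsv : QCommute (lam i₀ j₀) (star v) u := by
    simpa using hvu.star_left hv (inv_ne_zero hq)
  have hsusv : QCommute (lam i₀ j₀) (star u) (star v) := by
    simpa using (hsv.symm hq).star_left hu (inv_ne_zero hq)
  have hsvsu := hsusv.symm hq
  have hnu := QCommute.one_of_commute (K := ℂ) (commute_unitary_star_self hu)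
  have hnv := QCommute.one_of_commute (K := ℂ) (commute_unitary_star_self hv)
  have hsum : ∑ k, x k * star (x k) = 1 := by
    have hab' : a * star a + b * star b = 1 := by
      rw [Complex.star_def, Complex.mul_conj, Complex.mul_conj]
      exact_mod_cast hab
    rw [Fintype.sum_eq_add i₀ j₀ hne (fun k ⟨hk₀, hk₁⟩ => by simp [x, hk₀, hk₁])]
    simp only [hx₀, hx₁, star_smul, smul_mul_smul_comm, Unitary.mul_star_self_of_mem hu,
      Unitary.mul_star_self_of_mem hv, ← add_smul, hab', one_smul]
  -- Each `x k` is `a • u`, `b • v` or `0`, so every relation is one of the facts above.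
  refine ⟨fun i j => ?_, fun i j => ?_, fun i j => ?_, hsum⟩ <;>
    rcases hx i with rfl | rfl | hi <;> rcases hx j with rfl | rfl | hj <;>
    simp only [*, star_smul, star_zero, QCommute.smul, QCommute.self, QCommute.zero_left,
      QCommute.zero_right]

theorem stmt4_general (lam' : Fin 4 → Fin 4 → ℂ)
    (hunit : ∀ i j, ‖lam' i j‖ = 1)
    (hinv : ∀ i j, lam' j i = (lam' i j)⁻¹)
    (hdiag : ∀ i, lam' i i = 1)
    (A : Type) [Ring A] [Algebra ℂ A] [StarRing A]
    (z : Fin 4 → A)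
    (h1 : ∀ i j, z i * z j = lam' i j • (z j * z i))
    (huniv : ∀ (B : Type) [Ring B] [Algebra ℂ B] [StarRing B] [StarModule ℂ B]
      (v : Fin 4 → B),
      (∀ i j, v i * v j = lam' i j • (v j * v i)) →
      (∀ i j, star (v i) * v j = lam' j i • (v j * star (v i))) →
      (∀ i j, star (v i) * star (v j) = lam' i j • (star (v j) * star (v i))) →
      (∑ i, v i * star (v i)) = 1 →
      ∃! f : A →⋆ₐ[ℂ] B, ∀ i, f (z i) = v i)
    (haction : ∀ w₁ w₂ : ℂ, Complex.normSq w₁ + Complex.normSq w₂ = 1 →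
      ∃ f : A ≃⋆ₐ[ℂ] A,
        f (z 0) = w₁ • z 0 - (starRingEnd ℂ w₂) • z 1 ∧
        f (z 1) = w₂ • z 0 + (starRingEnd ℂ w₁) • z 1 ∧
        f (z 2) = w₁ • z 2 - (starRingEnd ℂ w₂) • z 3 ∧
        f (z 3) = w₂ • z 2 + (starRingEnd ℂ w₁) • z 3) :
    lam' 0 1 = 1 ∧ lam' 2 3 = 1 ∧
    lam' 0 2 = lam' 0 3 ∧ lam' 0 3 = lam' 1 2 ∧ lam' 1 2 = lam' 1 3 := by
  have hw : Complex.normSq (3 / 5) + Complex.normSq (4 / 5) = 1 := by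
    norm_num [Complex.normSq_apply]
  obtain ⟨f, hf₀, hf₁, hf₂, hf₃⟩ := haction _ _ hw
  have model (i₀ j₀ : Fin 4) (hne : i₀ ≠ j₀) : ∃ g : A →⋆ₐ[ℂ] 𝔹, ∀ k, g (z k) =
      (Pi.single i₀ ((3 / 5 : ℂ) • weylShift) +
        Pi.single j₀ ((4 / 5 : ℂ) • weylClock (hunit i₀ j₀)) : Fin 4 → 𝔹) k := by
    have h := isSphereFamily_pair hne (hinv _ _) (hdiag _) (hdiag _)
      (norm_ne_zero_iff.1 (by simp [hunit])) weylShift_mem_unitary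
      (weylClock_mem_unitary (hunit i₀ j₀)) (qCommute_weylShift_weylClock (hunit i₀ j₀)) hw
    exact (huniv _ _ h.comm h.star_comm h.star_star_comm h.sum_mul_star).exists
  have transfer (g : A →⋆ₐ[ℂ] 𝔹) (i j : Fin 4) :
      QCommute (lam' i j) (g (f (z i))) (g (f (z j))) :=
    QCommute.map (g.comp (f : A →⋆ₐ[ℂ] A)) (h1 i j)
  choose g hg using model
  have e01 : lam' 0 1 = 1 := QCommute.eq_one_of_mem_unitary weylShift_mem_unitary <| by
    simpa [hf₀, hf₁, hg] using transfer (g 0 2 (by decide)) 0 1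
  have e23 : lam' 2 3 = 1 := QCommute.eq_one_of_mem_unitary (weylClock_mem_unitary _) <| by
    simpa [hf₂, hf₃, hg] using transfer (g 0 2 (by decide)) 2 3
  have e03 : lam' 0 2 = lam' 0 3 := eq_of_qCommute_weylShift_weylClock _ <| by
    simpa [hf₀, hf₂, hg] using transfer (g 0 3 (by decide)) 0 2
  have e12 : lam' 0 2 = lam' 1 2 := eq_of_qCommute_weylShift_weylClock _ <| by
    simpa [hf₀, hf₂, hg] using transfer (g 1 2 (by decide)) 0 2
  have e13 : lam' 0 2 = lam' 1 3 := eq_of_qCommute_weylShift_weylClock _ <| by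
    simpa [hf₀, hf₂, hg] using transfer (g 1 3 (by decide)) 0 2
  exact ⟨e01, e23, e03, e03.symm.trans e12, e12.symm.trans e13⟩

/-- Requiring that α_w : (z^1,z^2,z^3,z^4) ↦ (z^1w^1 − z^2w̄^2, z^1w^2 + z^2w̄^1,
z^3w^1 − z^4w̄^2, z^3w^2 + z^4w̄^1) is a *-algebra automorphism of A(S^7_{θ'}) for every
w ∈ SU(2) forces λ'^{12} = λ'^{34} = 1 and λ'^{13} = λ'^{14} = λ'^{23} = λ'^{24}.
A(S^7_{θ'}) is encoded by its generators, relations and universal property. -/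
theorem stmt4 (lam' : Fin 4 → Fin 4 → ℂ)
    (hunit : ∀ i j, ‖lam' i j‖ = 1)
    (hinv : ∀ i j, lam' j i = (lam' i j)⁻¹)
    (hdiag : ∀ i, lam' i i = 1)
    (A : Type) [Ring A] [Algebra ℂ A] [StarRing A] [StarModule ℂ A]
    (z : Fin 4 → A)
    (h1 : ∀ i j, z i * z j = lam' i j • (z j * z i))
    (h2 : ∀ i j, star (z i) * z j = lam' j i • (z j * star (z i)))
    (h3 : ∀ i j, star (z i) * star (z j) = lam' i j • (star (z j) * star (z i)))
    (hsph : (∑ i, z i * star (z i)) = 1)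
    (huniv : ∀ (B : Type) [Ring B] [Algebra ℂ B] [StarRing B] [StarModule ℂ B]
      (v : Fin 4 → B),
      (∀ i j, v i * v j = lam' i j • (v j * v i)) →
      (∀ i j, star (v i) * v j = lam' j i • (v j * star (v i))) →
      (∀ i j, star (v i) * star (v j) = lam' i j • (star (v j) * star (v i))) →
      (∑ i, v i * star (v i)) = 1 →
      ∃! f : A →⋆ₐ[ℂ] B, ∀ i, f (z i) = v i)
    (haction : ∀ w₁ w₂ : ℂ, Complex.normSq w₁ + Complex.normSq w₂ = 1 →
      ∃ f : A ≃⋆ₐ[ℂ] A,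
        f (z 0) = w₁ • z 0 - (starRingEnd ℂ w₂) • z 1 ∧
        f (z 1) = w₂ • z 0 + (starRingEnd ℂ w₁) • z 1 ∧
        f (z 2) = w₁ • z 2 - (starRingEnd ℂ w₂) • z 3 ∧
        f (z 3) = w₂ • z 2 + (starRingEnd ℂ w₁) • z 3) :
    lam' 0 1 = 1 ∧ lam' 2 3 = 1 ∧
    lam' 0 2 = lam' 0 3 ∧ lam' 0 3 = lam' 1 2 ∧ lam' 1 2 = lam' 1 3 :=
  stmt4_general lam' hunit hinv hdiag A z h1 huniv haction
end

section
/- For every w ∈ SU(2), the *-automorphism α_w of A(S^7_{θ'}) fixes the elements α = 2(z^1 z̄^3 + z^2 z̄^4), β = 2(−z^1 z^4 + z^2 z^3), and x = z^1 z̄^1 + z^2 z̄^2 − z^3 z̄^3 − z^4 z̄^4. -/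
noncomputable section

variable {A : Type} [Ring A] [Algebra ℂ A] [StarRing A] [StarModule ℂ A]

/-- For every w ∈ SU(2), the *-automorphism α_w of A(S^7_{θ'}) fixes
α = 2(z^1z̄^3 + z^2z̄^4), β = 2(−z^1z^4 + z^2z^3) and x = z^1z̄^1 + z^2z̄^2 − z^3z̄^3 − z^4z̄^4. -/
theorem stmt5 (μ : ℂ) (z : Fin 4 → A) (hrel : S7Rel μ z)
    (w₁ w₂ : ℂ) (hw : Complex.normSq w₁ + Complex.normSq w₂ = 1)
    (f : A ≃⋆ₐ[ℂ] A)
    (hf0 : f (z 0) = w₁ • z 0 - (starRingEnd ℂ w₂) • z 1)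
    (hf1 : f (z 1) = w₂ • z 0 + (starRingEnd ℂ w₁) • z 1)
    (hf2 : f (z 2) = w₁ • z 2 - (starRingEnd ℂ w₂) • z 3)
    (hf3 : f (z 3) = w₂ • z 2 + (starRingEnd ℂ w₁) • z 3) :
    f (elA z) = elA z ∧ f (elB z) = elB z ∧ f (elX z) = elX z := by
  have h1 : w₁ * starRingEnd ℂ w₁ + w₂ * starRingEnd ℂ w₂ = 1 := by
    rw [Complex.mul_conj, Complex.mul_conj, ← Complex.ofReal_add, hw, Complex.ofReal_one]
  refine ⟨?_, ?_, ?_⟩ <;>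
  · simp only [elA, elB, elX, map_mul, map_add, map_sub, map_neg, map_ofNat, map_star,
      hf0, hf1, hf2, hf3, star_smul, star_sub, star_add, Complex.star_def,
      Complex.conj_conj, sub_mul, mul_sub, add_mul, mul_add, smul_mul_assoc,
      mul_smul_comm, smul_smul, mul_neg, neg_mul]
    match_scalars
    all_goals try ring1
    all_goals try linear_combination h1
    all_goals try linear_combination -h1
    all_goals try linear_combination (2:ℂ) * h1
    all_goals try linear_combination (-2:ℂ) * h1
    all_goals try linear_combination (3:ℂ) * h1
    all_goals try linear_combination (-3:ℂ) * h1
    all_goals try linear_combination (4:ℂ) * h1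
    all_goals linear_combination (-4:ℂ) * h1
end
end

section
/- The column vectors |ψ_1⟩ = (z^1, −z̄^2, z^3, −z̄^4)^t and |ψ_2⟩ = (z^2, z̄^1, z^4, z̄^3)^t in A(S^7_{θ'})^4 satisfy ⟨ψ_k | ψ_l⟩ = δ_{kl}, where ⟨ξ|η⟩ = Σ_j ξ_j* η_j. Consequently the 4×4 matrix p = |ψ_1⟩⟨ψ_1| + |ψ_2⟩⟨ψ_2| satisfies p² = p = p*. -/
noncomputable section

variable {A : Type} [Ring A] [Algebra ℂ A] [StarRing A] [StarModule ℂ A]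

/-! The frame `V = (ψ₁ ψ₂)` is an isometry, `V* V = 1`, and `p = V V*`; hence `p` is a
self-adjoint idempotent. The isometry relations follow from the sphere relation together with
the commutation of `z^i` and `z̄^j` for `i, j` in the same block `{1, 2}` or `{3, 4}`, where
`λ'^{ij} = 1`. -/

open scoped Matrix

section

variable {m n R : Type*} [Fintype m] [Fintype n] [DecidableEq n] [Semiring R] [Star R]

theorem Matrix.isIdempotentElem_mul_conjTranspose {V : Matrix m n R} (hV : Vᴴ * V = 1) :
    IsIdempotentElem (V * Vᴴ) := by
  rw [IsIdempotentElem, Matrix.mul_assoc, ← Matrix.mul_assoc Vᴴ, hV, Matrix.one_mul]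

end

theorem lam7_eq_one {i j : Fin 4} (μ : ℂ) (hij : (i : ℕ) < 2 ↔ (j : ℕ) < 2) :
    lam7 μ i j = 1 := by
  rw [lam7, if_pos (by omega)]

section

variable {R : Type} [Ring R] [StarRing R]

def frame (z : Fin 4 → R) : Matrix (Fin 4) (Fin 2) R :=
  Matrix.of fun i k => ![psi1 z, psi2 z] k i

theorem projP_eq_frame_mul_conjTranspose (z : Fin 4 → R) :
    projP z = frame z * (frame z)ᴴ := by
  ext i j
  simp [projP, frame, Matrix.mul_apply, Fin.sum_univ_two]

namespace S7Rel

variable [Algebra ℂ R] {μ : ℂ} {z : Fin 4 → R}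

theorem star_mul_comm (hz : S7Rel μ z) {i j : Fin 4} (hij : (i : ℕ) < 2 ↔ (j : ℕ) < 2) :
    star (z i) * z j = z j * star (z i) := by
  simpa [lam7_eq_one μ hij.symm] using hz.2.1 i j

theorem sphere (hz : S7Rel μ z) :
    z 0 * star (z 0) + z 1 * star (z 1) + z 2 * star (z 2) + z 3 * star (z 3) = 1 := by
  simpa [Fin.sum_univ_four] using hz.2.2.2

theorem sum_star_psi1_mul_psi1 (hz : S7Rel μ z) :
    ∑ j, star (psi1 z j) * psi1 z j = 1 := by
  simp only [psi1, Fin.sum_univ_four, Matrix.cons_val, star_neg, star_star, neg_mul_neg]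
  rw [hz.star_mul_comm (i := 0) (j := 0) Iff.rfl, hz.star_mul_comm (i := 2) (j := 2) Iff.rfl,
    hz.sphere]

theorem sum_star_psi2_mul_psi2 (hz : S7Rel μ z) :
    ∑ j, star (psi2 z j) * psi2 z j = 1 := by
  simp only [psi2, Fin.sum_univ_four, Matrix.cons_val, star_star]
  rw [hz.star_mul_comm (i := 1) (j := 1) Iff.rfl, hz.star_mul_comm (i := 3) (j := 3) Iff.rfl,
    ← hz.sphere]
  abel

theorem sum_star_psi1_mul_psi2 (hz : S7Rel μ z) :
    ∑ j, star (psi1 z j) * psi2 z j = 0 := by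
  simp only [psi1, psi2, Fin.sum_univ_four, Matrix.cons_val, star_neg, star_star, neg_mul]
  rw [hz.star_mul_comm (i := 0) (j := 1) (by decide),
    hz.star_mul_comm (i := 2) (j := 3) (by decide)]
  abel

theorem sum_star_psi2_mul_psi1 (hz : S7Rel μ z) :
    ∑ j, star (psi2 z j) * psi1 z j = 0 := by
  simp only [psi1, psi2, Fin.sum_univ_four, Matrix.cons_val, star_star, mul_neg]
  rw [hz.star_mul_comm (i := 1) (j := 0) (by decide),
    hz.star_mul_comm (i := 3) (j := 2) (by decide)]
  abel

theorem conjTranspose_frame_mul_frame (hz : S7Rel μ z) : (frame z)ᴴ * frame z = 1 := by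
  ext k l
  fin_cases k <;> fin_cases l <;>
    simp [frame, Matrix.mul_apply, hz.sum_star_psi1_mul_psi1, hz.sum_star_psi1_mul_psi2,
      hz.sum_star_psi2_mul_psi1, hz.sum_star_psi2_mul_psi2]

end S7Rel

end

/-- ⟨ψ_k|ψ_l⟩ = δ_{kl} for |ψ_1⟩ = (z^1,−z̄^2,z^3,−z̄^4)^t and
|ψ_2⟩ = (z^2,z̄^1,z^4,z̄^3)^t; consequently p = |ψ_1⟩⟨ψ_1| + |ψ_2⟩⟨ψ_2| satisfies
p² = p = p*. -/
theorem stmt6 (μ : ℂ) (z : Fin 4 → A) (hrel : S7Rel μ z) :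
    (∑ j, star (psi1 z j) * psi1 z j) = 1 ∧
    (∑ j, star (psi1 z j) * psi2 z j) = 0 ∧
    (∑ j, star (psi2 z j) * psi1 z j) = 0 ∧
    (∑ j, star (psi2 z j) * psi2 z j) = 1 ∧
    projP z * projP z = projP z ∧
    star (projP z) = projP z := by
  refine ⟨hrel.sum_star_psi1_mul_psi1, hrel.sum_star_psi1_mul_psi2,
    hrel.sum_star_psi2_mul_psi1, hrel.sum_star_psi2_mul_psi2, ?_, ?_⟩ <;>
    rw [projP_eq_frame_mul_conjTranspose]
  · exact Matrix.isIdempotentElem_mul_conjTranspose hrel.conjTranspose_frame_mul_frame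
  · exact (Matrix.isHermitian_mul_conjTranspose_self (frame z)).eq
end
end

section
/- The entries of the projection p = |ψ_1⟩⟨ψ_1| + |ψ_2⟩⟨ψ_2| all lie in the subalgebra A(S^4_θ) generated by α, β, α*, β*, x; explicitly, 2p equals the matrix with rows (1+x, 0, α, β), (0, 1+x, −μβ*, μ̄α*), (α*, −μ̄β, 1−x, 0), (β*, μα, 0, 1−x). -/
/-! Every entry of `p` is a quadratic expression in the `z^i` and `z̄^i`. Once the commutation
relations of `S^7_θ'` bring each monomial into a normal order, the off-diagonal `2 × 2` blocks of
`2p` are read off as `α`, `β`, their adjoints and their multiples by `μ` and `μ̄ = μ⁻¹`, while the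
sphere relation `Σ z^i z̄^i = 1` turns the diagonal entries into `1 ± x`. As `2` is invertible
in `ℂ`, the entries of `p` itself lie in the `*`-subalgebra generated by `α`, `β` and `x`. -/

noncomputable section

variable {A : Type} [Ring A] [Algebra ℂ A] [StarRing A] [StarModule ℂ A]

theorem lam7_of_lt_of_lt (μ : ℂ) {i j : Fin 4} (hi : i < 2) (hj : j < 2) : lam7 μ i j = 1 :=
  if_pos (Or.inl ⟨hi, hj⟩)

theorem lam7_of_le_of_le (μ : ℂ) {i j : Fin 4} (hi : 2 ≤ i) (hj : 2 ≤ j) : lam7 μ i j = 1 :=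
  if_pos (Or.inr ⟨hi, hj⟩)

theorem lam7_of_lt_of_le (μ : ℂ) {i j : Fin 4} (hi : i < 2) (hj : 2 ≤ j) : lam7 μ i j = μ := by
  rw [Fin.lt_def, Fin.val_two] at hi
  rw [Fin.le_def, Fin.val_two] at hj
  rw [lam7, if_neg (by omega), if_pos hi]

theorem lam7_of_le_of_lt (μ : ℂ) {i j : Fin 4} (hi : 2 ≤ i) (hj : j < 2) : lam7 μ i j = μ⁻¹ := by
  rw [Fin.le_def, Fin.val_two] at hi
  rw [Fin.lt_def, Fin.val_two] at hj
  rw [lam7, if_neg (by omega), if_neg (by omega)]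

theorem Submodule.nsmul_mem_iff {K M : Type*} [DivisionRing K] [CharZero K] [AddCommGroup M]
    [Module K M] (p : Submodule K M) {n : ℕ} (hn : n ≠ 0) {x : M} : n • x ∈ p ↔ x ∈ p := by
  rw [← Nat.cast_smul_eq_nsmul K, p.smul_mem_iff (Nat.cast_ne_zero.mpr hn)]

/-- The matrix `2p` of the paper, in terms of the generators `α = a`, `β = b`, `x` of `A(S^4_θ)`. -/
def doubleProjS4 (μ : ℂ) (a b x : A) : Matrix (Fin 4) (Fin 4) A :=
  !![1 + x, 0, a, b;
     0, 1 + x, -(μ • star b), star μ • star a;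
     star a, -(star μ • b), 1 - x, 0;
     star b, μ • a, 0, 1 - x]

theorem doubleProjS4_apply_mem {S : StarSubalgebra ℂ A} {a b x : A}
    (h : ({a, b, x} : Set A) ⊆ S) (μ : ℂ) (i j : Fin 4) : doubleProjS4 μ a b x i j ∈ S := by
  rw [Set.insert_subset_iff, Set.insert_subset_iff, Set.singleton_subset_iff] at h
  obtain ⟨ha, hb, hx⟩ := h
  fin_cases i <;> fin_cases j <;>
    simp only [doubleProjS4, Matrix.of_apply, Matrix.cons_val, Fin.reduceFinMk] <;>
    apply_rules [add_mem, sub_mem, neg_mem, one_mem, zero_mem, star_mem, SMulMemClass.smul_mem]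

omit [StarModule ℂ A] in
theorem S7Rel.two_nsmul_projP {μ : ℂ} {z : Fin 4 → A} (h : S7Rel μ z) (hμ : ‖μ‖ = 1) :
    (2 : ℕ) • projP z = doubleProjS4 μ (elA z) (elB z) (elX z) := by
  obtain ⟨hzz, hsz, hss, hsum⟩ := h
  rw [Fin.sum_univ_four] at hsum
  have hinv : star μ = μ⁻¹ := (Complex.inv_eq_conj hμ).symm
  ext i j
  -- The relations rewrite every monomial into the normal order where each `z` precedes each `z̄`,
  -- the `z`'s have increasing and the `z̄`'s decreasing indices.
  -- Only the diagonal entries then need the sphere relation.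
  fin_cases i <;> fin_cases j <;>
    simp only [Matrix.smul_apply, projP, psi1, psi2, doubleProjS4, elA, elB, elX, Matrix.of_apply,
      Matrix.cons_val, Fin.reduceFinMk, star_neg, star_star, star_add, star_mul, mul_neg, neg_mul,
      neg_neg, hinv, two_mul, hsz, hzz 1 0, hzz 3 2, hzz 2 1, hzz 3 0, hss 0 1, hss 1 2, hss 0 3,
      hss 2 3, lam7_of_lt_of_lt, lam7_of_le_of_le, lam7_of_lt_of_le, lam7_of_le_of_lt, Fin.reduceLT,
      Fin.reduceLE] <;>
    first | module | linear_combination (norm := module) hsum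

/-- The entries of p = |ψ_1⟩⟨ψ_1| + |ψ_2⟩⟨ψ_2| lie in the subalgebra A(S^4_θ)
generated by α, β, α*, β*, x; explicitly 2p is the displayed matrix. -/
theorem stmt7 (μ : ℂ) (hμ : ‖μ‖ = 1) (z : Fin 4 → A) (hrel : S7Rel μ z) :
    (∀ i j, projP z i j ∈ StarAlgebra.adjoin ℂ ({elA z, elB z, elX z} : Set A)) ∧
    (2 : ℕ) • projP z =
      !![1 + elX z, 0, elA z, elB z;
         0, 1 + elX z, -(μ • star (elB z)), (star μ) • star (elA z);
         star (elA z), -((star μ) • elB z), 1 - elX z, 0;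
         star (elB z), μ • elA z, 0, 1 - elX z] := by
  have hp : (2 : ℕ) • projP z = doubleProjS4 μ (elA z) (elB z) (elX z) := hrel.two_nsmul_projP hμ
  refine ⟨fun i j => ?_, hp⟩
  have hmem := doubleProjS4_apply_mem (StarAlgebra.subset_adjoin ℂ {elA z, elB z, elX z}) μ i j
  rw [← hp, Matrix.smul_apply] at hmem
  exact ((StarAlgebra.adjoin ℂ {elA z, elB z, elX z}).toSubalgebra.toSubmodule.nsmul_mem_iff
    two_ne_zero).mp hmem
end
end

section
/- Let u be the 4×2 matrix over A(S^7_{θ'}) with columns |ψ_1⟩ = (z^1, −z̄^2, z^3, −z̄^4)^t and |ψ_2⟩ = (z^2, z̄^1, z^4, z̄^3)^t. Then u* u = I_2, and for each w ∈ SU(2) the automorphism α_w (applied entrywise) satisfies α_w(u) = u·w, where w is the 2×2 matrix with rows (w^1, w^2), (−w̄^2, w̄^1). -/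
noncomputable section

variable {A : Type} [Ring A] [Algebra ℂ A] [StarRing A] [StarModule ℂ A]

set_option maxHeartbeats 1000000 in
/-- For u = (|ψ_1⟩, |ψ_2⟩) one has u*u = I₂, and for every w ∈ SU(2) the
automorphism α_w applied entrywise satisfies α_w(u) = u·w, where w is the 2×2 matrix with
rows (w^1, w^2), (−w̄^2, w̄^1). -/
theorem stmt8 (μ : ℂ) (z : Fin 4 → A) (hrel : S7Rel μ z)
    (w₁ w₂ : ℂ) (hw : Complex.normSq w₁ + Complex.normSq w₂ = 1)
    (f : A ≃⋆ₐ[ℂ] A)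
    (hf0 : f (z 0) = w₁ • z 0 - (starRingEnd ℂ w₂) • z 1)
    (hf1 : f (z 1) = w₂ • z 0 + (starRingEnd ℂ w₁) • z 1)
    (hf2 : f (z 2) = w₁ • z 2 - (starRingEnd ℂ w₂) • z 3)
    (hf3 : f (z 3) = w₂ • z 2 + (starRingEnd ℂ w₁) • z 3) :
    -- u* u = I₂
    ((∑ i, star (psi1 z i) * psi1 z i) = 1 ∧
     (∑ i, star (psi1 z i) * psi2 z i) = 0 ∧
     (∑ i, star (psi2 z i) * psi1 z i) = 0 ∧
     (∑ i, star (psi2 z i) * psi2 z i) = 1) ∧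
    -- α_w(u) = u·w, columnwise
    (∀ i, f (psi1 z i) = w₁ • psi1 z i - (starRingEnd ℂ w₂) • psi2 z i) ∧
    (∀ i, f (psi2 z i) = w₂ • psi1 z i + (starRingEnd ℂ w₁) • psi2 z i) := by
  obtain ⟨h1, h2, h3, hs⟩ := hrel
  have lam11 : ∀ i : Fin 4, lam7 μ i i = 1 := by
    intro i; fin_cases i <;> norm_num [lam7]
  have lam01 : lam7 μ 0 1 = 1 := by norm_num [lam7]
  have lam10 : lam7 μ 1 0 = 1 := by norm_num [lam7]
  have lam23 : lam7 μ 2 3 = 1 := by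
    norm_num [lam7, show ((2:Fin 4):ℕ) = 2 from rfl, show ((3:Fin 4):ℕ) = 3 from rfl]
  have lam32 : lam7 μ 3 2 = 1 := by
    norm_num [lam7, show ((2:Fin 4):ℕ) = 2 from rfl, show ((3:Fin 4):ℕ) = 3 from rfl]
  have c00 : star (z 0) * z 0 = z 0 * star (z 0) := by simpa [lam11] using h2 0 0
  have c11 : star (z 1) * z 1 = z 1 * star (z 1) := by simpa [lam11] using h2 1 1
  have c22 : star (z 2) * z 2 = z 2 * star (z 2) := by simpa [lam11] using h2 2 2
  have c33 : star (z 3) * z 3 = z 3 * star (z 3) := by simpa [lam11] using h2 3 3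
  have c01 : star (z 0) * z 1 = z 1 * star (z 0) := by simpa [lam10] using h2 0 1
  have c10 : star (z 1) * z 0 = z 0 * star (z 1) := by simpa [lam01] using h2 1 0
  have c23 : star (z 2) * z 3 = z 3 * star (z 2) := by simpa [lam32] using h2 2 3
  have c32 : star (z 3) * z 2 = z 2 * star (z 3) := by simpa [lam23] using h2 3 2
  have hs4 : z 0 * star (z 0) + z 1 * star (z 1) + z 2 * star (z 2) + z 3 * star (z 3) = 1 := by
    simpa [Fin.sum_univ_four] using hs
  refine ⟨⟨?_, ?_, ?_, ?_⟩, ?_, ?_⟩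
  · simpa [psi1, Fin.sum_univ_four, c00, c11, c22, c33] using hs
  · simp [psi1, psi2, Fin.sum_univ_four, c01, c23]
  · simp [psi1, psi2, Fin.sum_univ_four, c10, c32]
  · simp only [psi2, Fin.sum_univ_four, Matrix.cons_val_zero, Matrix.cons_val_one,
      Matrix.head_cons, Matrix.cons_val_two, Matrix.tail_cons, Matrix.cons_val_three,
      star_star, c00, c11, c22, c33]
    rw [← hs4]; abel
  · intro i
    fin_cases i
    · simpa [psi1, psi2] using hf0
    · show f (-star (z 1)) = w₁ • (-star (z 1)) - (starRingEnd ℂ w₂) • star (z 0)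
      rw [map_neg, map_star, hf1]
      simp only [star_add, star_smul, starRingEnd_apply, star_star]
      module
    · simpa [psi1, psi2] using hf2
    · show f (-star (z 3)) = w₁ • (-star (z 3)) - (starRingEnd ℂ w₂) • star (z 2)
      rw [map_neg, map_star, hf3]
      simp only [star_add, star_smul, starRingEnd_apply, star_star]
      module
  · intro i
    fin_cases i
    · simpa [psi1, psi2] using hf1
    · show f (star (z 0)) = w₂ • (-star (z 1)) + (starRingEnd ℂ w₁) • star (z 0)
      rw [map_star, hf0]
      simp only [star_sub, star_smul, starRingEnd_apply, star_star]
      module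
    · simpa [psi1, psi2] using hf3
    · show f (star (z 2)) = w₂ • (-star (z 3)) + (starRingEnd ℂ w₁) • star (z 2)
      rw [map_star, hf2]
      simp only [star_sub, star_smul, starRingEnd_apply, star_star]
      module
end
end

section
/- The projections p (built from |ψ_1⟩, |ψ_2⟩) and p̃ (built from |ψ̃_1⟩ = (z^1, −μz̄^2, z^3, −z̄^4)^t, |ψ̃_2⟩ = (z^2, μz̄^1, z^4, z̄^3)^t) are unitarily equivalent in Mat_4(A(S^4_θ)): there is a diagonal unitary U ∈ Mat_4(A(S^4_θ)) with p̃ = U p U*. -/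
noncomputable section

variable {A : Type} [Ring A] [Algebra ℂ A] [StarRing A] [StarModule ℂ A]

/-- |ψ̃_1⟩ = (z^1, −μz̄^2, z^3, −z̄^4)^t. -/
def psit1 (μ : ℂ) (z : Fin 4 → A) : Fin 4 → A := ![z 0, -(μ • star (z 1)), z 2, -star (z 3)]

/-- |ψ̃_2⟩ = (z^2, μz̄^1, z^4, z̄^3)^t. -/
def psit2 (μ : ℂ) (z : Fin 4 → A) : Fin 4 → A := ![z 1, μ • star (z 0), z 3, star (z 2)]

/-- p̃ = |ψ̃_1⟩⟨ψ̃_1| + |ψ̃_2⟩⟨ψ̃_2|. -/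
def projPt (μ : ℂ) (z : Fin 4 → A) : Matrix (Fin 4) (Fin 4) A :=
  fun i j => psit1 μ z i * star (psit1 μ z j) + psit2 μ z i * star (psit2 μ z j)

/-!
The two frames differ only by the phase μ in their second components: `ψ̃ₖ = c • ψₖ` with
`c = (1, μ, 1, 1)`. Since `μ² = e^{2πiθ}` forces `|μ| = 1`, the diagonal matrix with entries
`cᵢ • 1` is unitary, and conjugating `p` by it multiplies the `(i, j)` entry by `cᵢ c̄ⱼ`, which is
exactly how `p̃` is obtained from `p`.
-/

open Matrix

theorem Complex.mem_unitary_of_sq_eq_exp {μ : ℂ} {θ : ℝ}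
    (h : μ ^ 2 = Complex.exp (2 * Real.pi * Complex.I * θ)) : μ ∈ unitary ℂ := by
  have hnorm : ‖μ‖ = 1 := by
    have hsq : ‖μ‖ ^ 2 = 1 := by
      rw [← norm_pow, h,
        show 2 * (Real.pi : ℂ) * Complex.I * θ = ((2 * Real.pi * θ : ℝ) : ℂ) * Complex.I by
          push_cast; ring]
      exact Complex.norm_exp_ofReal_mul_I _
    exact (pow_eq_one_iff_of_nonneg (norm_nonneg _) two_ne_zero).1 hsq
  rw [Unitary.mem_iff_self_mul_star, Complex.star_def, Complex.mul_conj', hnorm]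
  norm_num

section DiagonalUnitary

variable {n : Type*} [Fintype n] [DecidableEq n]

theorem Matrix.diagonal_mem_unitary {R : Type*} [Semiring R] [StarRing R] {d : n → R}
    (hd : ∀ i, d i ∈ unitary R) : diagonal d ∈ unitary (Matrix n n R) := by
  simp only [Unitary.mem_iff, star_eq_conjTranspose, diagonal_conjTranspose,
    diagonal_mul_diagonal, Pi.star_apply, Unitary.star_mul_self_of_mem (hd _),
    Unitary.mul_star_self_of_mem (hd _), diagonal_one, and_self]

theorem Matrix.diagonal_smul_one_mul_mul_star {R B : Type*} [CommSemiring R] [StarRing R]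
    [Semiring B] [StarRing B] [Algebra R B] [StarModule R B] (c : n → R) (M : Matrix n n B) :
    diagonal (fun i => c i • (1 : B)) * M * star (diagonal fun i => c i • (1 : B)) =
      of fun i j => (c i * star (c j)) • M i j := by
  ext i j
  simp [star_eq_conjTranspose, diagonal_conjTranspose, mul_diagonal, diagonal_mul, smul_smul,
    mul_comm]

end DiagonalUnitary

def phase (μ : ℂ) : Fin 4 → ℂ := ![1, μ, 1, 1]

theorem phase_mem_unitary {μ : ℂ} (hμ : μ ∈ unitary ℂ) (i : Fin 4) : phase μ i ∈ unitary ℂ := by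
  fin_cases i <;> simp [phase, hμ]

theorem psit1_eq_phase_smul {B : Type} [Ring B] [Algebra ℂ B] [StarRing B] (μ : ℂ)
    (z : Fin 4 → B) : psit1 μ z = phase μ • psi1 z := by
  ext i; fin_cases i <;> simp [psit1, psi1, phase]

theorem psit2_eq_phase_smul {B : Type} [Ring B] [Algebra ℂ B] [StarRing B] (μ : ℂ)
    (z : Fin 4 → B) : psit2 μ z = phase μ • psi2 z := by
  ext i; fin_cases i <;> simp [psit2, psi2, phase]

theorem projPt_eq_phase_smul_projP (μ : ℂ) (z : Fin 4 → A) :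
    projPt μ z = of fun i j => (phase μ i * star (phase μ j)) • projP z i j := by
  ext i j
  simp only [projPt, projP, psit1_eq_phase_smul, psit2_eq_phase_smul, Pi.smul_apply', star_smul,
    smul_mul_smul, smul_add, of_apply]

theorem stmt9_general (θ : ℝ) (lam μ : ℂ) (hlam : lam = Complex.exp (2 * Real.pi * Complex.I * θ))
    (hμ : μ ^ 2 = lam) (z : Fin 4 → A) :
    ∃ d : Fin 4 → A,
      (∀ i, d i ∈ StarAlgebra.adjoin ℂ ({elA z, elB z, elX z} : Set A)) ∧
      Matrix.diagonal d * star (Matrix.diagonal d) = 1 ∧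
      star (Matrix.diagonal d) * Matrix.diagonal d = 1 ∧
      projPt μ z = Matrix.diagonal d * projP z * star (Matrix.diagonal d) := by
  have hμ_unitary : μ ∈ unitary ℂ := Complex.mem_unitary_of_sq_eq_exp (hlam ▸ hμ)
  have hU : diagonal (fun i => phase μ i • (1 : A)) ∈ unitary (Matrix (Fin 4) (Fin 4) A) :=
    diagonal_mem_unitary fun i =>
      Unitary.smul_mem_of_mem (phase_mem_unitary hμ_unitary i) (one_mem _)
  refine ⟨fun i => phase μ i • 1, fun i => Subalgebra.smul_mem _ (one_mem _) _,
    Unitary.mul_star_self_of_mem hU, Unitary.star_mul_self_of_mem hU, ?_⟩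
  rw [diagonal_smul_one_mul_mul_star, projPt_eq_phase_smul_projP]

/-- The projections p and p̃ are unitarily equivalent in Mat₄(A(S^4_θ)) via a
diagonal unitary U with entries in A(S^4_θ): p̃ = U p U*. -/
theorem stmt9 (θ : ℝ) (lam μ : ℂ) (hlam : lam = Complex.exp (2 * Real.pi * Complex.I * θ))
    (hμ : μ ^ 2 = lam) (z : Fin 4 → A) (hrel : S7Rel μ z) :
    ∃ d : Fin 4 → A,
      (∀ i, d i ∈ StarAlgebra.adjoin ℂ ({elA z, elB z, elX z} : Set A)) ∧
      Matrix.diagonal d * star (Matrix.diagonal d) = 1 ∧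
      star (Matrix.diagonal d) * Matrix.diagonal d = 1 ∧
      projPt μ z = Matrix.diagonal d * projP z * star (Matrix.diagonal d) :=
  stmt9_general θ lam μ hlam hμ z
end
end

section
/- With a_k² = binom(n, k−1), the symmetrized vectors |φ_k⟩ = a_k^{-1} |ψ_1⟩^{⊗(n−k+1)} ⊗_S |ψ_2⟩^{⊗(k−1)} ∈ A(S^7_{θ'})^{4^n} (k = 1,...,n+1) satisfy ⟨φ_k | φ_l⟩ = δ_{kl}, so that p_(n) = Σ_{k=1}^{n+1} |φ_k⟩⟨φ_k| is a projection in Mat_{4^n}(A(S^7_{θ'})), p_(n)² = p_(n) = p_(n)*. -/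
/-!
Let `V` be the matrix whose columns are the `φ_k`; then `p_(n) = V V*`, so everything follows
from `V* V = 1`. Labelling a tensor of `ψ_1`'s and `ψ_2`'s by the set `S` of positions carrying
`ψ_2`, `V` factors as (the `n`-th tensor power of `Ψ = (ψ_1 ψ_2)`, restricted to these labels)
times the matrix whose `k`-th column is `binom(n, k)^{-1/2}` times the indicator of the
`k`-subsets. `Ψ* Ψ = 1` is the orthonormality of `ψ_1, ψ_2`, which uses only the sphere relation
and the commutation of `z̄^i` with `z^j` inside the blocks `{1, 2}` and `{3, 4}`; tensor powers of
matrices with orthonormal columns have orthonormal columns (entries are multiplied in a fixed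
order, so no commutativity is needed), and the second factor has orthonormal columns because
there are `binom(n, k)` subsets of size `k`.
-/

noncomputable section

variable {A : Type} [Ring A] [Algebra ℂ A] [StarRing A] [StarModule ℂ A]

/-- The normalized symmetrized vector |φ_k⟩ = a_k⁻¹ |ψ_1⟩^{⊗(n−k+1)} ⊗_S |ψ_2⟩^{⊗(k−1)}
(k-1 factors of ψ_2, here k : Fin (n+1) is the number of ψ_2 factors), a_k² = binom(n,k−1),
as an element of A^{4^n} with 4^n indexed by multi-indices Fin n → Fin 4. -/
def phiVec (z : Fin 4 → A) (n : ℕ) (k : Fin (n + 1)) (m : Fin n → Fin 4) : A :=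
  (((Real.sqrt (n.choose (k : ℕ)))⁻¹ : ℝ) : ℂ) •
    ∑ S ∈ Finset.powersetCard (k : ℕ) (Finset.univ : Finset (Fin n)),
      ((List.finRange n).map (fun j => if j ∈ S then psi2 z (m j) else psi1 z (m j))).prod

/-- The projection p_(n) = Σ_{k} |φ_k⟩⟨φ_k| ∈ Mat_{4^n}(A(S^7_{θ'})). -/
def projPn (z : Fin 4 → A) (n : ℕ) : Matrix (Fin n → Fin 4) (Fin n → Fin 4) A :=
  fun m m' => ∑ k : Fin (n + 1), phiVec z n k m * star (phiVec z n k m')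

open Matrix

namespace Matrix

variable {ι τ σ R : Type*}

def tensorPow [Monoid R] (V : Matrix ι τ R) (n : ℕ) : Matrix (Fin n → ι) (Fin n → τ) R :=
  of fun m t => (List.ofFn fun j => V (m j) (t j)).prod

theorem tensorPow_cons_apply [Monoid R] (V : Matrix ι τ R) {n : ℕ} (i : ι) (m : Fin n → ι)
    (t : Fin (n + 1) → τ) :
    V.tensorPow (n + 1) (Fin.cons i m) t = V i (t 0) * V.tensorPow n m (Fin.tail t) := by
  simp [tensorPow, List.ofFn_succ, Fin.tail]

variable [Semiring R] [StarRing R]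

theorem conjTranspose_mul_self_tensorPow_eq_one [Fintype ι] [DecidableEq τ] {V : Matrix ι τ R}
    (hV : Vᴴ * V = 1) (n : ℕ) : (V.tensorPow n)ᴴ * V.tensorPow n = 1 := by
  induction n with
  | zero => ext t t'; simp [Subsingleton.elim t t', tensorPow, Matrix.mul_apply, one_apply]
  | succ n ih =>
    ext t t'
    calc ((V.tensorPow (n + 1))ᴴ * V.tensorPow (n + 1)) t t'
        = ∑ m, star (V.tensorPow n m (Fin.tail t)) * (∑ i, star (V i (t 0)) * V i (t' 0)) *
            V.tensorPow n m (Fin.tail t') := by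
          rw [Matrix.mul_apply, ← (Fin.consEquiv fun _ => ι).sum_comp, Fintype.sum_prod_type,
            Finset.sum_comm]
          simp only [Fin.consEquiv, Equiv.coe_fn_mk, conjTranspose_apply, tensorPow_cons_apply,
            star_mul, Finset.mul_sum, Finset.sum_mul, mul_assoc]
      _ = (1 : Matrix τ τ R) (t 0) (t' 0) *
            ((V.tensorPow n)ᴴ * V.tensorPow n) (Fin.tail t) (Fin.tail t') := by
          have hV0 : ∑ i, star (V i (t 0)) * V i (t' 0) = (1 : Matrix τ τ R) (t 0) (t' 0) := by
            simpa only [Matrix.mul_apply, conjTranspose_apply] using congrFun₂ hV (t 0) (t' 0)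
          rw [hV0, one_apply, Matrix.mul_apply]
          split_ifs <;> simp
      _ = (1 : Matrix (Fin (n + 1) → τ) (Fin (n + 1) → τ) R) t t' := by
          have hsplit : t = t' ↔ t 0 = t' 0 ∧ Fin.tail t = Fin.tail t' := by
            conv_lhs => rw [← Fin.cons_self_tail t, ← Fin.cons_self_tail t']
            exact Fin.cons_inj
          rw [ih, one_apply, one_apply, one_apply, if_congr hsplit rfl rfl, ite_and]
          split_ifs <;> simp

theorem conjTranspose_mul_self_submatrix_eq_one [Fintype ι] [DecidableEq τ] [DecidableEq σ]
    {V : Matrix ι τ R} (hV : Vᴴ * V = 1) {f : σ → τ} (hf : Function.Injective f) :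
    (V.submatrix id f)ᴴ * V.submatrix id f = 1 := by
  rw [conjTranspose_submatrix, ← submatrix_mul _ _ _ _ _ Function.bijective_id, hV,
    submatrix_one _ hf]

theorem conjTranspose_mul_self_mul_eq_one [Fintype ι] [Fintype τ] [DecidableEq τ]
    [DecidableEq σ] {V : Matrix ι τ R} {W : Matrix τ σ R} (hV : Vᴴ * V = 1)
    (hW : Wᴴ * W = 1) : (V * W)ᴴ * (V * W) = 1 := by
  rw [conjTranspose_mul, Matrix.mul_assoc, ← Matrix.mul_assoc Vᴴ, hV, Matrix.one_mul, hW]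

end Matrix

theorem Finset.decide_mem_injective {α : Type*} [DecidableEq α] :
    Function.Injective fun (S : Finset α) (j : α) => decide (j ∈ S) :=
  fun S T h => Finset.ext fun j => by simpa using congrFun h j

section

variable {A : Type} [Ring A] [Algebra ℂ A] [StarRing A]

def psiMatrix (z : Fin 4 → A) : Matrix (Fin 4) Bool A :=
  of fun i b => cond b (psi2 z i) (psi1 z i)

theorem psiMatrix_conjTranspose_mul_self_eq_one {μ : ℂ} {z : Fin 4 → A} (hrel : S7Rel μ z) :
    (psiMatrix z)ᴴ * psiMatrix z = 1 := by
  obtain ⟨-, hbar, -, hsphere⟩ := hrel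
  have comm : ∀ i j, lam7 μ j i = 1 → star (z i) * z j = z j * star (z i) := fun i j h => by
    rw [hbar, h, one_smul]
  have c00 := comm 0 0 (by simp [lam7])
  have c11 := comm 1 1 (by simp [lam7])
  have c22 := comm 2 2 (by simp [lam7])
  have c33 := comm 3 3 (by simp [lam7])
  have c01 := comm 0 1 (by simp [lam7])
  have c10 := comm 1 0 (by simp [lam7])
  have c23 := comm 2 3 (by simp [lam7])
  have c32 := comm 3 2 (by simp [lam7])
  rw [Fin.sum_univ_four] at hsphere
  ext a b
  cases a <;> cases b <;>
    simp only [psiMatrix, psi1, psi2, Matrix.mul_apply, conjTranspose_apply, of_apply, cond_false,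
      cond_true, Fin.sum_univ_four, cons_val_zero, cons_val_one, cons_val, star_neg, star_star,
      mul_neg, neg_mul, neg_neg, one_apply_eq, one_apply_ne, ne_eq, Bool.false_eq_true,
      Bool.true_eq_false, not_false_eq_true]
  · rw [c00, c22, ← hsphere]
  · rw [c01, c23]; abel
  · rw [c10, c32]; abel
  · rw [c11, c33, ← hsphere]; abel

variable (A) in
def symmetrizer (n : ℕ) : Matrix (Finset (Fin n)) (Fin (n + 1)) A :=
  of fun S k => if S.card = k then ((((√(n.choose k))⁻¹ : ℝ) : ℂ) • 1 : A) else 0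

theorem symmetrizer_conjTranspose_mul_self_eq_one [StarModule ℂ A] (n : ℕ) :
    (symmetrizer A n)ᴴ * symmetrizer A n = 1 := by
  ext k l
  simp only [Matrix.mul_apply, one_apply, conjTranspose_apply]
  split_ifs with hkl
  · subst hkl
    have hchoose : (n.choose k : ℂ) ≠ 0 := by
      exact_mod_cast (Nat.choose_pos (Nat.lt_succ_iff.mp k.isLt)).ne'
    have hterm : ∀ S : Finset (Fin n), star (symmetrizer A n S k) * symmetrizer A n S k =
        if S ∈ Finset.powersetCard k Finset.univ then (n.choose k : ℂ)⁻¹ • 1 else 0 := by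
      intro S
      simp only [symmetrizer, of_apply, Finset.mem_powersetCard_univ]
      split_ifs
      · rw [star_smul, star_one, Complex.star_def, Complex.conj_ofReal, smul_mul_smul, one_mul,
          ← Complex.ofReal_mul, ← mul_inv, Real.mul_self_sqrt (Nat.cast_nonneg _),
          Complex.ofReal_inv, Complex.ofReal_natCast]
      · simp
    rw [Finset.sum_congr rfl fun S _ => hterm S, Finset.sum_ite_mem, Finset.univ_inter,
      Finset.sum_const, Finset.card_powersetCard, Finset.card_univ, Fintype.card_fin,
      ← Nat.cast_smul_eq_nsmul ℂ, smul_smul, mul_inv_cancel₀ hchoose, one_smul]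
  · refine Finset.sum_eq_zero fun S _ => ?_
    simp only [symmetrizer, of_apply]
    split_ifs with hk hl
    · exact absurd (Fin.ext (hk.symm.trans hl)) hkl
    all_goals simp

def phiMatrix (z : Fin 4 → A) (n : ℕ) : Matrix (Fin n → Fin 4) (Fin (n + 1)) A :=
  ((psiMatrix z).tensorPow n).submatrix id (fun (S : Finset (Fin n)) j => decide (j ∈ S)) *
    symmetrizer A n

theorem phiVec_eq_phiMatrix_apply (z : Fin 4 → A) (n : ℕ) (k : Fin (n + 1))
    (m : Fin n → Fin 4) : phiVec z n k m = phiMatrix z n m k := by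
  simp only [phiVec, phiMatrix, Finset.smul_sum, Matrix.mul_apply, submatrix_apply, id,
    symmetrizer, of_apply, mul_ite, mul_zero, mul_smul_comm, mul_one,
    ← Finset.mem_powersetCard_univ]
  rw [Finset.sum_ite_mem, Finset.univ_inter]
  refine Finset.sum_congr rfl fun S _ => ?_
  simp only [tensorPow, psiMatrix, of_apply, List.ofFn_eq_map]
  congr 3
  funext j
  by_cases hj : j ∈ S <;> simp [hj]

theorem phiMatrix_conjTranspose_mul_self_eq_one [StarModule ℂ A] {μ : ℂ} {z : Fin 4 → A}
    (hrel : S7Rel μ z) (n : ℕ) : (phiMatrix z n)ᴴ * phiMatrix z n = 1 :=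
  conjTranspose_mul_self_mul_eq_one
    (conjTranspose_mul_self_submatrix_eq_one
      (conjTranspose_mul_self_tensorPow_eq_one (psiMatrix_conjTranspose_mul_self_eq_one hrel) n)
      Finset.decide_mem_injective)
    (symmetrizer_conjTranspose_mul_self_eq_one n)

end

theorem stmt10_general (μ : ℂ) (z : Fin 4 → A) (hrel : S7Rel μ z) (n : ℕ) :
    (∀ k l : Fin (n + 1),
      (∑ m : Fin n → Fin 4, star (phiVec z n k m) * phiVec z n l m) =
        if k = l then 1 else 0) ∧
    projPn z n * projPn z n = projPn z n ∧
    star (projPn z n) = projPn z n := by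
  set V := phiMatrix z n
  have hV : Vᴴ * V = 1 := phiMatrix_conjTranspose_mul_self_eq_one hrel n
  have hP : projPn z n = V * Vᴴ := by
    ext m m'
    simp only [projPn, phiVec_eq_phiMatrix_apply, Matrix.mul_apply, conjTranspose_apply, V]
  refine ⟨fun k l => ?_, ?_, ?_⟩
  · simpa only [phiVec_eq_phiMatrix_apply, Matrix.mul_apply, conjTranspose_apply, one_apply]
      using congrFun₂ hV k l
  · rw [hP, Matrix.mul_assoc, ← Matrix.mul_assoc Vᴴ, hV, Matrix.one_mul]
  · rw [hP, star_eq_conjTranspose]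
    exact isHermitian_mul_conjTranspose_self V

/-- The symmetrized vectors |φ_k⟩ satisfy ⟨φ_k|φ_l⟩ = δ_{kl}, so that
p_(n) = Σ_k |φ_k⟩⟨φ_k| is a projection: p_(n)² = p_(n) = p_(n)*. -/
theorem stmt10 (μ : ℂ) (z : Fin 4 → A) (hrel : S7Rel μ z) (n : ℕ) (hn : 0 < n) :
    (∀ k l : Fin (n + 1),
      (∑ m : Fin n → Fin 4, star (phiVec z n k m) * phiVec z n l m) =
        if k = l then 1 else 0) ∧
    projPn z n * projPn z n = projPn z n ∧
    star (projPn z n) = projPn z n :=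
  stmt10_general μ z hrel n
end
end

section
/- Every entry of the projection p_(n) = Σ_{k=1}^{n+1} |φ_k⟩⟨φ_k| ∈ Mat_{4^n}(A(S^7_{θ'})) is invariant under the SU(2)-action α_w, i.e. lies in the fixed-point subalgebra A(S^4_θ) = Inv_{SU(2)}(A(S^7_{θ'})). -/
noncomputable section

variable {A : Type} [Ring A] [Algebra ℂ A] [StarRing A] [StarModule ℂ A]

/-! Put `ψ false = ψ₁`, `ψ true = ψ₂`, and let `w_m(S)` be the ordered product of the slots
`ψ (j ∈ S) (m j)`. Since exactly `|S|! (n - |S|)!` permutations carry `S` onto a given `S'` of the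
same size, averaging over the symmetric group gives
`p_(n)(m, m') = (n!)⁻¹ ∑_π ∑_S w_m(S) w_{m'}(π S)^*`, the factors `1 / binom(n, k)` of the
normalized `φ_k` being absorbed by that count. The action `α_w` acts on every slot by the same
unitary `2 × 2` matrix `U`, hence on the `w_m(S)` by `U^{⊗n}`, and each `π`-twisted sum is invariant
because `U^{⊗n}` is unitary and commutes with permuting the slots. -/

open Finset Equiv
open scoped Nat

theorem Finset.image_perm_eq_iff {α : Type*} [DecidableEq α] (π : Perm α) (S S' : Finset α) :
    S.image π = S' ↔ ∀ a, a ∈ S ↔ π a ∈ S' := by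
  constructor
  · rintro rfl a
    simp
  · intro h
    ext b
    simp only [mem_image]
    constructor
    · rintro ⟨a, ha, rfl⟩
      exact (h a).1 ha
    · exact fun hb => ⟨π.symm b, (h _).2 (by simpa using hb), by simp⟩

theorem Finset.sum_prod_decide_mem {α R : Type*} [Fintype α] [DecidableEq α] [CommSemiring R]
    (g : α → Bool → R) :
    ∑ S : Finset α, ∏ i, g i (decide (i ∈ S)) = ∏ i, ∑ b, g i b := by
  simp_rw [Fintype.sum_bool, Fintype.prod_add]
  refine sum_congr rfl fun S _ => ?_
  rw [← prod_mul_prod_compl S]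
  congr 1 <;> refine prod_congr rfl fun i hi => ?_ <;> simp_all

theorem List.prod_map_sum_bool {ι R : Type*} [DecidableEq ι] [Semiring R] (l : List ι)
    (hl : l.Nodup) (F : ι → Bool → R) :
    (l.map fun j => ∑ b, F j b).prod =
      ∑ T ∈ l.toFinset.powerset, (l.map fun j => F j (decide (j ∈ T))).prod := by
  induction l with
  | nil => simp
  | cons a l ih =>
    obtain ⟨hal, hl⟩ := List.nodup_cons.1 hl
    have hat : a ∉ l.toFinset := by simpa using hal
    have eq_on_l (T : Finset ι) :
        (l.map fun j => F j (decide (j ∈ insert a T))) = l.map fun j => F j (decide (j ∈ T)) :=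
      List.map_congr_left fun j hj => by simp [show j ≠ a by rintro rfl; exact hal hj]
    rw [List.map_cons, List.prod_cons, ih hl, List.toFinset_cons, sum_powerset_insert hat,
      Fintype.sum_bool, add_mul, add_comm, mul_sum, mul_sum]
    congr 1 <;> refine sum_congr rfl fun T hT => ?_
    · have haT : a ∉ T := fun h => hat (mem_powerset.1 hT h)
      simp [haT]
    · rw [List.map_cons, List.prod_cons, eq_on_l]
      simp

theorem List.prod_map_smul {ι K R : Type*} [CommSemiring K] [Semiring R] [Algebra K R]
    (l : List ι) (r : ι → K) (x : ι → R) :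
    (l.map fun j => r j • x j).prod = (l.map r).prod • (l.map x).prod := by
  induction l with
  | nil => simp
  | cons a l ih => simp only [List.map_cons, List.prod_cons, ih, smul_mul_smul_comm]

section PermutationCount

variable {α : Type*} [Fintype α] [DecidableEq α]

def permMapsToEquiv (S S' : Finset α) :
    {π : Perm α // ∀ a, a ∈ S ↔ π a ∈ S'} ≃
      ({a // a ∈ S} ≃ {a // a ∈ S'}) × ({a // a ∉ S} ≃ {a // a ∉ S'}) where
  toFun π := (π.1.subtypeEquiv π.2, π.1.subtypeEquiv fun a => not_congr (π.2 a))
  invFun e := ⟨subtypeCongr e.1 e.2, fun a => by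
    by_cases ha : a ∈ S
    · simp [subtypeCongr, ha, sumCompl_symm_apply_of_pos]
    · simp [subtypeCongr, ha, sumCompl_symm_apply_of_neg, (e.2 _).2]⟩
  left_inv π := by
    ext a
    by_cases ha : a ∈ S <;>
      simp [subtypeCongr, ha, sumCompl_symm_apply_of_pos, sumCompl_symm_apply_of_neg]
  right_inv e := by
    ext a <;> simp [subtypeCongr, a.2, sumCompl_symm_apply_of_pos, sumCompl_symm_apply_of_neg]

theorem card_perm_image_eq (S S' : Finset α) :
    #{π : Perm α | S.image π = S'} =
      if #S = #S' then (#S)! * (Fintype.card α - #S)! else 0 := by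
  split_ifs with h
  · have eS : {a // a ∈ S} ≃ {a // a ∈ S'} := Fintype.equivOfCardEq (by simpa using h)
    have eC : {a // a ∉ S} ≃ {a // a ∉ S'} :=
      Fintype.equivOfCardEq (by simp [Fintype.card_subtype_compl, h])
    rw [← Fintype.card_subtype, Fintype.card_congr
      ((subtypeEquivRight fun π => Finset.image_perm_eq_iff π S S').trans
        (permMapsToEquiv S S')), Fintype.card_prod, Fintype.card_equiv eS, Fintype.card_equiv eC,
      Fintype.card_coe, Fintype.card_subtype_compl, Fintype.card_coe]
  · rw [Finset.card_eq_zero, filter_eq_empty_iff]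
    rintro π - rfl
    exact h (card_image_of_injective _ π.injective).symm

theorem sum_perm_sum_image {M : Type*} [AddCommMonoid M] (X : Finset α → Finset α → M) :
    ∑ π : Perm α, ∑ S, X S (S.image π) =
      ∑ S, ∑ S' ∈ powersetCard #S univ, ((#S)! * (Fintype.card α - #S)!) • X S S' := by
  rw [sum_comm]
  refine sum_congr rfl fun S _ => ?_
  rw [← sum_fiberwise_of_maps_to (t := univ) (g := fun π : Perm α => S.image π)
    (fun _ _ => mem_univ _)]
  have fiber (S' : Finset α) :
      ∑ π ∈ univ.filter (fun π : Perm α => S.image π = S'), X S (S.image π) =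
      #{π : Perm α | S.image π = S'} • X S S' := by
    rw [← sum_const (X S S')]
    refine sum_congr rfl fun π hπ => ?_
    rw [(mem_filter.1 hπ).2]
  simp_rw [fiber, card_perm_image_eq, ite_smul, zero_smul, ← sum_filter]
  refine sum_congr ?_ fun S' _ => rfl
  ext S'
  simp [eq_comm]

theorem sum_inv_choose_smul_sum_powersetCard {K M : Type*} [Field K] [CharZero K]
    [AddCommMonoid M] [Module K M] (X : Finset α → Finset α → M) :
    ∑ k ∈ range (Fintype.card α + 1), ((Fintype.card α).choose k : K)⁻¹ •
        ∑ S ∈ powersetCard k univ, ∑ S' ∈ powersetCard k univ, X S S' =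
      ((Fintype.card α)! : K)⁻¹ • ∑ π : Perm α, ∑ S, X S (S.image π) := by
  rw [sum_perm_sum_image, ← powerset_univ, sum_powerset, card_univ, smul_sum]
  refine sum_congr rfl fun k hk => ?_
  rw [smul_sum, smul_sum]
  refine sum_congr rfl fun S hS => ?_
  rw [mem_powersetCard_univ.1 hS, smul_sum, smul_sum]
  refine sum_congr rfl fun S' _ => ?_
  rw [← Nat.cast_smul_eq_nsmul K, smul_smul,
    Nat.cast_choose K (Nat.lt_succ_iff.1 (mem_range.1 hk))]
  push_cast
  rw [inv_div, div_eq_inv_mul]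

end PermutationCount

section TensorPower

variable {K R : Type*} {n : ℕ}

def wordProd {ι : Type*} [Monoid R] (ψ : Bool → ι → R) (m : Fin n → ι)
    (S : Finset (Fin n)) : R :=
  ((List.finRange n).map fun j => ψ (decide (j ∈ S)) (m j)).prod

def tensorPowerCoeff {α : Type*} [Fintype α] [DecidableEq α] [CommMonoid K]
    (U : Matrix Bool Bool K) (S T : Finset α) : K :=
  ∏ j, U (decide (j ∈ S)) (decide (j ∈ T))

theorem map_wordProd {ι F : Type*} [CommSemiring K] [Semiring R] [Algebra K R] [FunLike F R R]
    [AlgHomClass F K R R] (f : F) (U : Matrix Bool Bool K) (ψ : Bool → ι → R)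
    (hψ : ∀ s i, f (ψ s i) = ∑ t, U s t • ψ t i) (m : Fin n → ι) (S : Finset (Fin n)) :
    f (wordProd ψ m S) = ∑ T, tensorPowerCoeff U S T • wordProd ψ m T := by
  simp only [wordProd, map_list_prod, List.map_map, Function.comp_def, hψ]
  rw [List.prod_map_sum_bool _ (List.nodup_finRange n), List.toFinset_finRange, powerset_univ]
  simp only [List.prod_map_smul, tensorPowerCoeff, Fin.prod_univ_def]

theorem tensorPowerCoeff_image_perm {α : Type*} [Fintype α] [DecidableEq α] [CommMonoid K]
    (U : Matrix Bool Bool K) (π : Perm α) (S T : Finset α) :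
    tensorPowerCoeff U (S.image π) T = ∏ i, U (decide (i ∈ S)) (decide (π i ∈ T)) := by
  rw [tensorPowerCoeff, ← Equiv.prod_comp π]
  simp [π.injective.mem_finset_image]

theorem sum_tensorPowerCoeff_mul_star {α : Type*} [Fintype α] [DecidableEq α] [CommRing K]
    [StarRing K] {U : Matrix Bool Bool K} (hU : U ∈ Matrix.unitaryGroup Bool K) (π : Perm α)
    (T T' : Finset α) :
    ∑ S, tensorPowerCoeff U S T * star (tensorPowerCoeff U (S.image π) T') =
      if T.image π = T' then 1 else 0 := by
  have columns_orthonormal (t t' : Bool) :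
      ∑ s, U s t * star (U s t') = if t = t' then 1 else 0 := by
    have := congr_fun₂ (Matrix.mem_unitaryGroup_iff'.1 hU) t' t
    simp only [Matrix.mul_apply, Matrix.star_apply, Matrix.one_apply] at this
    simp_rw [mul_comm (U _ t), this, eq_comm]
  simp_rw [tensorPowerCoeff_image_perm, tensorPowerCoeff, star_prod, ← prod_mul_distrib,
    sum_prod_decide_mem (fun i b => U b (decide (i ∈ T)) * star (U b (decide (π i ∈ T')))),
    columns_orthonormal, decide_eq_decide, prod_boole, mem_univ, true_imp_iff, image_perm_eq_iff]

theorem map_sum_wordProd_mul_star_image {ι F : Type*} [CommRing K] [StarRing K] [Ring R]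
    [StarRing R] [Algebra K R] [StarModule K R] [FunLike F R R] [AlgHomClass F K R R]
    [StarHomClass F R R] (f : F) {U : Matrix Bool Bool K} (hU : U ∈ Matrix.unitaryGroup Bool K)
    (ψ : Bool → ι → R) (hψ : ∀ s i, f (ψ s i) = ∑ t, U s t • ψ t i) (π : Perm (Fin n))
    (m m' : Fin n → ι) :
    f (∑ S, wordProd ψ m S * star (wordProd ψ m' (S.image π))) =
      ∑ S, wordProd ψ m S * star (wordProd ψ m' (S.image π)) := by
  calc _ = ∑ T, ∑ T', (∑ S, tensorPowerCoeff U S T * star (tensorPowerCoeff U (S.image π) T')) •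
          (wordProd ψ m T * star (wordProd ψ m' T')) := by
        simp only [map_sum, map_mul, map_star, map_wordProd f U ψ hψ, star_sum, star_smul,
          sum_mul_sum, smul_mul_smul_comm, sum_smul]
        rw [sum_comm]
        exact sum_congr rfl fun T _ => sum_comm
    _ = _ := by
        simp_rw [sum_tensorPowerCoeff_mul_star hU, ite_smul, one_smul, zero_smul,
          Fintype.sum_ite_eq]

end TensorPower

def su2Matrix (w₁ w₂ : ℂ) : Matrix Bool Bool ℂ
  | false, false => w₁
  | false, true => -star w₂
  | true, false => w₂
  | true, true => star w₁

theorem su2Matrix_mem_unitaryGroup {w₁ w₂ : ℂ}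
    (hw : Complex.normSq w₁ + Complex.normSq w₂ = 1) :
    su2Matrix w₁ w₂ ∈ Matrix.unitaryGroup Bool ℂ := by
  have hw' : starRingEnd ℂ w₁ * w₁ + starRingEnd ℂ w₂ * w₂ = 1 := by
    simp only [← Complex.normSq_eq_conj_mul_self]
    exact_mod_cast hw
  rw [Matrix.mem_unitaryGroup_iff']
  ext s t
  cases s <;> cases t <;> simp [Matrix.mul_apply, Matrix.star_apply, su2Matrix] <;>
    first | ring1 | linear_combination hw'

def psiPair (z : Fin 4 → A) (b : Bool) : Fin 4 → A :=
  bif b then psi2 z else psi1 z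

theorem phiVec_mul_star (z : Fin 4 → A) (n : ℕ) (k : Fin (n + 1)) (m m' : Fin n → Fin 4) :
    phiVec z n k m * star (phiVec z n k m') = ((n.choose k : ℂ))⁻¹ •
      ∑ S ∈ powersetCard k univ, ∑ S' ∈ powersetCard k univ,
        wordProd (psiPair z) m S * star (wordProd (psiPair z) m' S') := by
  set c : ℝ := (√(n.choose k : ℝ))⁻¹ with hc
  have phiVec_eq (m : Fin n → Fin 4) :
      phiVec z n k m = (c : ℂ) • ∑ S ∈ powersetCard k univ, wordProd (psiPair z) m S := by
    simp only [phiVec, wordProd, psiPair, Bool.cond_decide, ite_apply, ← hc]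
  have normalization : star (c : ℂ) * c = ((n.choose k : ℂ))⁻¹ := by
    rw [Complex.star_def, Complex.conj_ofReal, ← Complex.ofReal_mul, hc, ← mul_inv,
      Real.mul_self_sqrt (Nat.cast_nonneg _), Complex.ofReal_inv, Complex.ofReal_natCast]
  rw [phiVec_eq, phiVec_eq, star_smul, smul_mul_smul_comm, mul_comm, normalization, star_sum,
    sum_mul_sum]

theorem projPn_eq_smul_sum_perm (z : Fin 4 → A) (n : ℕ) (m m' : Fin n → Fin 4) :
    projPn z n m m' = ((n ! : ℂ))⁻¹ • ∑ π : Perm (Fin n), ∑ S,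
      wordProd (psiPair z) m S * star (wordProd (psiPair z) m' (S.image π)) := by
  have := sum_inv_choose_smul_sum_powersetCard (K := ℂ)
    fun S S' : Finset (Fin n) => wordProd (psiPair z) m S * star (wordProd (psiPair z) m' S')
  rw [Fintype.card_fin] at this
  rw [← this, projPn, sum_range]
  simp_rw [phiVec_mul_star]

theorem map_psiPair {w₁ w₂ : ℂ} (z : Fin 4 → A) (f : A ≃⋆ₐ[ℂ] A)
    (hf0 : f (z 0) = w₁ • z 0 - (starRingEnd ℂ w₂) • z 1)
    (hf1 : f (z 1) = w₂ • z 0 + (starRingEnd ℂ w₁) • z 1)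
    (hf2 : f (z 2) = w₁ • z 2 - (starRingEnd ℂ w₂) • z 3)
    (hf3 : f (z 3) = w₂ • z 2 + (starRingEnd ℂ w₁) • z 3) (s : Bool) (i : Fin 4) :
    f (psiPair z s i) = ∑ t, su2Matrix w₁ w₂ s t • psiPair z t i := by
  cases s <;> fin_cases i <;>
    simp only [psiPair, psi1, psi2, su2Matrix, Fintype.sum_bool, cond_true, cond_false,
      Fin.zero_eta, Fin.mk_one, Fin.reduceFinMk, Matrix.cons_val, map_neg, map_star, hf0, hf1,
      hf2, hf3, star_sub, star_add, star_smul, Complex.star_def, Complex.conj_conj] <;>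
    module

theorem stmt11_general (z : Fin 4 → A) (n : ℕ)
    (w₁ w₂ : ℂ) (hw : Complex.normSq w₁ + Complex.normSq w₂ = 1)
    (f : A ≃⋆ₐ[ℂ] A)
    (hf0 : f (z 0) = w₁ • z 0 - (starRingEnd ℂ w₂) • z 1)
    (hf1 : f (z 1) = w₂ • z 0 + (starRingEnd ℂ w₁) • z 1)
    (hf2 : f (z 2) = w₁ • z 2 - (starRingEnd ℂ w₂) • z 3)
    (hf3 : f (z 3) = w₂ • z 2 + (starRingEnd ℂ w₁) • z 3) :
    ∀ m m' : Fin n → Fin 4, f (projPn z n m m') = projPn z n m m' := by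
  intro m m'
  rw [projPn_eq_smul_sum_perm, map_smul, map_sum]
  simp_rw [map_sum_wordProd_mul_star_image f (su2Matrix_mem_unitaryGroup hw) (psiPair z)
    (map_psiPair z f hf0 hf1 hf2 hf3)]

/-- Every entry of p_(n) is invariant under the SU(2)-action α_w, i.e. lies in
the fixed-point subalgebra A(S^4_θ) = Inv_{SU(2)}(A(S^7_{θ'})). -/
theorem stmt11 (μ : ℂ) (z : Fin 4 → A) (hrel : S7Rel μ z) (n : ℕ) (hn : 0 < n)
    (w₁ w₂ : ℂ) (hw : Complex.normSq w₁ + Complex.normSq w₂ = 1)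
    (f : A ≃⋆ₐ[ℂ] A)
    (hf0 : f (z 0) = w₁ • z 0 - (starRingEnd ℂ w₂) • z 1)
    (hf1 : f (z 1) = w₂ • z 0 + (starRingEnd ℂ w₁) • z 1)
    (hf2 : f (z 2) = w₁ • z 2 - (starRingEnd ℂ w₂) • z 3)
    (hf3 : f (z 3) = w₂ • z 2 + (starRingEnd ℂ w₁) • z 3) :
    ∀ m m' : Fin n → Fin 4, f (projPn z n m m') = projPn z n m m' :=
  stmt11_general z n w₁ w₂ hw f hf0 hf1 hf2 hf3
end
end

section
/- The canonical map χ: A(S^7_{θ'}) ⊗_{A(S^4_θ)} A(S^7_{θ'}) → A(S^7_{θ'}) ⊗ A(SU(2)), p' ⊗ p ↦ p' p_{(0)} ⊗ p_{(1)}, is surjective; in particular, with |ψ_1⟩, |ψ_2⟩ as above, χ(Σ_i (ψ_1)_i* ⊗ (ψ_1)_i) = 1 ⊗ w^1, χ(Σ_i (ψ_1)_i* ⊗ (ψ_2)_i) = 1 ⊗ w^2, χ(Σ_i (ψ_2)_i* ⊗ (ψ_1)_i) = −1 ⊗ w̄^2, and χ(Σ_i (ψ_2)_i* ⊗ (ψ_2)_i)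 = 1 ⊗ w̄^1. -/
open scoped TensorProduct

noncomputable section

variable {A : Type} [Ring A] [Algebra ℂ A] [StarRing A] [StarModule ℂ A]

/-- Twisted multiplication map: `twmul (x' ⊗ y') (x ⊗ y) = (x' * x) ⊗ (y * y')`. -/
def twmul : (A ⊗[ℂ] A) →ₗ[ℂ] (A ⊗[ℂ] A) →ₗ[ℂ] (A ⊗[ℂ] A) :=
  TensorProduct.lift <| LinearMap.mk₂ ℂ
    (fun x' y' => TensorProduct.map (LinearMap.mulLeft ℂ x') (LinearMap.mulRight ℂ y'))
    (fun a b y' => by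
      rw [show LinearMap.mulLeft ℂ (a + b) = LinearMap.mulLeft ℂ a + LinearMap.mulLeft ℂ b
        from LinearMap.ext fun x => add_mul a b x, TensorProduct.map_add_left])
    (fun c a y' => by
      rw [show LinearMap.mulLeft ℂ (c • a) = c • LinearMap.mulLeft ℂ a
        from LinearMap.ext fun x => smul_mul_assoc c a x, TensorProduct.map_smul_left])
    (fun x' a b => by
      rw [show LinearMap.mulRight ℂ (a + b) = LinearMap.mulRight ℂ a + LinearMap.mulRight ℂ b
        from LinearMap.ext fun x => mul_add x a b, TensorProduct.map_add_right])
    (fun c x' a => by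
      rw [show LinearMap.mulRight ℂ (c • a) = c • LinearMap.mulRight ℂ a
        from LinearMap.ext fun x => mul_smul_comm c x a, TensorProduct.map_smul_right])

set_option linter.unusedSectionVars false in
theorem twmul_tmul (x' y' x y : A) :
    twmul (x' ⊗ₜ[ℂ] y') (x ⊗ₜ[ℂ] y) = (x' * x) ⊗ₜ[ℂ] (y * y') := rfl

/-- The canonical map χ : A(S^7_{θ'}) ⊗_{A(S^4_θ)} A(S^7_{θ'}) →
A(S^7_{θ'}) ⊗ A(SU(2)), p'⊗p ↦ p'p_{(0)} ⊗ p_{(1)}, is surjective, with the four displayed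
preimages of 1⊗w^1, 1⊗w^2, −1⊗w̄^2, 1⊗w̄^1.  The canonical map is encoded by its lift
χ̄ : P ⊗_ℂ P → P ⊗_ℂ H (which has the same range as χ). -/
theorem stmt13 (μ : ℂ) (z : Fin 4 → A) (hrel : S7Rel μ z)
    (H : Type) [CommRing H] [Algebra ℂ H] [StarRing H] [StarModule ℂ H]
    (w₁ w₂ : H) (hw : w₁ * star w₁ + w₂ * star w₂ = 1)
    (hHgen : StarAlgebra.adjoin ℂ ({w₁, w₂} : Set H) = ⊤)
    (ΔR : A →ₐ[ℂ] A ⊗[ℂ] H)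
    (hΔR0 : ΔR (z 0) = z 0 ⊗ₜ[ℂ] w₁ - z 1 ⊗ₜ[ℂ] star w₂)
    (hΔR1 : ΔR (z 1) = z 0 ⊗ₜ[ℂ] w₂ + z 1 ⊗ₜ[ℂ] star w₁)
    (hΔR2 : ΔR (z 2) = z 2 ⊗ₜ[ℂ] w₁ - z 3 ⊗ₜ[ℂ] star w₂)
    (hΔR3 : ΔR (z 3) = z 2 ⊗ₜ[ℂ] w₂ + z 3 ⊗ₜ[ℂ] star w₁)
    (hΔRs0 : ΔR (star (z 0)) = star (z 0) ⊗ₜ[ℂ] star w₁ - star (z 1) ⊗ₜ[ℂ] w₂)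
    (hΔRs1 : ΔR (star (z 1)) = star (z 0) ⊗ₜ[ℂ] star w₂ + star (z 1) ⊗ₜ[ℂ] w₁)
    (hΔRs2 : ΔR (star (z 2)) = star (z 2) ⊗ₜ[ℂ] star w₁ - star (z 3) ⊗ₜ[ℂ] w₂)
    (hΔRs3 : ΔR (star (z 3)) = star (z 2) ⊗ₜ[ℂ] star w₂ + star (z 3) ⊗ₜ[ℂ] w₁)
    (χbar : A ⊗[ℂ] A →ₗ[ℂ] A ⊗[ℂ] H)
    (hχbar : χbar =
      (LinearMap.mul' ℂ (A ⊗[ℂ] H)) ∘ₗ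
      (TensorProduct.map (Algebra.TensorProduct.includeLeft :
          A →ₐ[ℂ] A ⊗[ℂ] H).toLinearMap LinearMap.id) ∘ₗ
      (TensorProduct.map LinearMap.id ΔR.toLinearMap)) :
    χbar (∑ i, star (psi1 z i) ⊗ₜ[ℂ] psi1 z i) = 1 ⊗ₜ[ℂ] w₁ ∧
    χbar (∑ i, star (psi1 z i) ⊗ₜ[ℂ] psi2 z i) = 1 ⊗ₜ[ℂ] w₂ ∧
    χbar (∑ i, star (psi2 z i) ⊗ₜ[ℂ] psi1 z i) = -(1 ⊗ₜ[ℂ] star w₂) ∧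
    χbar (∑ i, star (psi2 z i) ⊗ₜ[ℂ] psi2 z i) = 1 ⊗ₜ[ℂ] star w₁ ∧
    Function.Surjective χbar := by
  obtain ⟨hzz, hsz, hss, hsum⟩ := hrel
  -- commutation across generators in the same block
  have hc : ∀ i j : Fin 4, (((i : ℕ) < 2 ∧ (j : ℕ) < 2) ∨ (2 ≤ (i : ℕ) ∧ 2 ≤ (j : ℕ))) →
      star (z i) * z j = z j * star (z i) := by
    intro i j h
    rw [hsz i j, lam7, if_pos (h.imp And.symm And.symm), one_smul]
  have c00 := hc 0 0 (by decide)
  have c01 := hc 0 1 (by decide)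
  have c10 := hc 1 0 (by decide)
  have c11 := hc 1 1 (by decide)
  have c22 := hc 2 2 (by decide)
  have c23 := hc 2 3 (by decide)
  have c32 := hc 3 2 (by decide)
  have c33 := hc 3 3 (by decide)
  have hsum4 : z 0 * star (z 0) + z 1 * star (z 1) + z 2 * star (z 2) + z 3 * star (z 3)
      = 1 := by rw [Fin.sum_univ_four] at hsum; exact hsum
  -- the canonical map on simple tensors
  have key : ∀ x y : A, χbar (x ⊗ₜ[ℂ] y) = (x ⊗ₜ[ℂ] (1 : H)) * ΔR y := by
    intro x y
    simp [hχbar, LinearMap.mul'_apply]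
  have e1 : χbar (∑ i, star (psi1 z i) ⊗ₜ[ℂ] psi1 z i) = 1 ⊗ₜ[ℂ] w₁ := by
    rw [Fin.sum_univ_four]
    simp only [psi1, Matrix.cons_val_zero, Matrix.cons_val_one, Matrix.head_cons,
      Matrix.cons_val_two, Matrix.tail_cons, Matrix.cons_val_three, star_neg, star_star,
      TensorProduct.neg_tmul, TensorProduct.tmul_neg, neg_neg]
    rw [map_add, map_add, map_add, key, key, key, key, hΔR0, hΔRs1, hΔR2, hΔRs3]
    simp only [mul_sub, mul_add, Algebra.TensorProduct.tmul_mul_tmul, one_mul, mul_one]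
    rw [c00, c01, c22, c23, ← hsum4]
    simp only [TensorProduct.add_tmul]
    abel

  have e2 : χbar (∑ i, star (psi1 z i) ⊗ₜ[ℂ] psi2 z i) = 1 ⊗ₜ[ℂ] w₂ := by
    rw [Fin.sum_univ_four]
    simp only [psi1, psi2, Matrix.cons_val_zero, Matrix.cons_val_one, Matrix.head_cons,
      Matrix.cons_val_two, Matrix.tail_cons, Matrix.cons_val_three, star_neg, star_star,
      TensorProduct.neg_tmul, TensorProduct.tmul_neg, neg_neg]
    simp only [map_add, map_neg, key]
    rw [hΔR1, hΔRs0, hΔR3, hΔRs2]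
    simp only [mul_sub, mul_add, neg_sub, neg_add, neg_neg,
      Algebra.TensorProduct.tmul_mul_tmul, one_mul, mul_one]
    rw [c00, c01, c22, c23, ← hsum4]
    simp only [TensorProduct.add_tmul]
    abel
  have e3 : χbar (∑ i, star (psi2 z i) ⊗ₜ[ℂ] psi1 z i) = -(1 ⊗ₜ[ℂ] star w₂) := by
    rw [Fin.sum_univ_four]
    simp only [psi1, psi2, Matrix.cons_val_zero, Matrix.cons_val_one, Matrix.head_cons,
      Matrix.cons_val_two, Matrix.tail_cons, Matrix.cons_val_three, star_neg, star_star,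
      TensorProduct.neg_tmul, TensorProduct.tmul_neg, neg_neg]
    simp only [map_add, map_neg, key]
    rw [hΔR0, hΔRs1, hΔR2, hΔRs3]
    simp only [mul_sub, mul_add, neg_sub, neg_add, neg_neg,
      Algebra.TensorProduct.tmul_mul_tmul, one_mul, mul_one]
    rw [c10, c11, c32, c33, ← hsum4]
    simp only [TensorProduct.add_tmul]
    abel
  have e4 : χbar (∑ i, star (psi2 z i) ⊗ₜ[ℂ] psi2 z i) = 1 ⊗ₜ[ℂ] star w₁ := by
    rw [Fin.sum_univ_four]
    simp only [psi1, psi2, Matrix.cons_val_zero, Matrix.cons_val_one, Matrix.head_cons,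
      Matrix.cons_val_two, Matrix.tail_cons, Matrix.cons_val_three, star_neg, star_star,
      TensorProduct.neg_tmul, TensorProduct.tmul_neg, neg_neg]
    simp only [map_add, map_neg, key]
    rw [hΔR1, hΔRs0, hΔR3, hΔRs2]
    simp only [mul_sub, mul_add, neg_sub, neg_add, neg_neg,
      Algebra.TensorProduct.tmul_mul_tmul, one_mul, mul_one]
    rw [c10, c11, c32, c33, ← hsum4]
    simp only [TensorProduct.add_tmul]
    abel
  refine ⟨e1, e2, e3, e4, ?_⟩
  -- surjectivity
  have hcomm : ∀ (u : A ⊗[ℂ] H) (h : H), ((1 : A) ⊗ₜ[ℂ] h) * u = u * ((1 : A) ⊗ₜ[ℂ] h) := by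
    intro u h
    induction u using TensorProduct.induction_on with
    | zero => simp
    | tmul a g => simp [Algebra.TensorProduct.tmul_mul_tmul, mul_comm]
    | add x y hx hy => rw [mul_add, add_mul, hx, hy]
  have L1 : ∀ (x' y' : A) (t : A ⊗[ℂ] A),
      χbar (twmul (x' ⊗ₜ[ℂ] y') t) = (x' ⊗ₜ[ℂ] (1 : H)) * χbar t * ΔR y' := by
    intro x' y' t
    induction t using TensorProduct.induction_on with
    | zero => simp
    | tmul x y =>
        rw [twmul_tmul, key, key, map_mul, ← mul_assoc]
        rw [show x' ⊗ₜ[ℂ] (1 : H) * (x ⊗ₜ[ℂ] (1 : H) * ΔR y)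
            = (x' * x) ⊗ₜ[ℂ] (1 : H) * ΔR y from by
          rw [← mul_assoc, Algebra.TensorProduct.tmul_mul_tmul, one_mul]]
    | add u v hu hv => simp only [map_add, hu, hv, mul_add, add_mul]
  have L2 : ∀ (t' t : A ⊗[ℂ] A) (h : H), χbar t = (1 : A) ⊗ₜ[ℂ] h →
      χbar (twmul t' t) = χbar t' * ((1 : A) ⊗ₜ[ℂ] h) := by
    intro t' t h ht
    induction t' using TensorProduct.induction_on with
    | zero => simp
    | tmul x' y' => rw [L1, ht, key, mul_assoc, mul_assoc, hcomm]
    | add u v hu hv =>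
        simp only [map_add, LinearMap.add_apply, hu, hv, add_mul]
  have hmemgen : ∀ h : H, h ∈ Algebra.adjoin ℂ (({w₁, w₂} : Set H) ∪ star {w₁, w₂}) := by
    intro h
    have : (StarAlgebra.adjoin ℂ ({w₁, w₂} : Set H)).toSubalgebra =
        Algebra.adjoin ℂ (({w₁, w₂} : Set H) ∪ star {w₁, w₂}) :=
      StarAlgebra.adjoin_toSubalgebra ℂ _
    rw [← this, hHgen]
    exact Set.mem_univ h
  have hmem : ∀ h : H, ∃ t, χbar t = (1 : A) ⊗ₜ[ℂ] h := by
    intro h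
    refine Algebra.adjoin_induction ?_ ?_ ?_ ?_ (hmemgen h)
    · intro x hx
      rcases hx with hx | hx
      · simp only [Set.mem_insert_iff, Set.mem_singleton_iff] at hx
        rcases hx with rfl | rfl
        · exact ⟨_, e1⟩
        · exact ⟨_, e2⟩
      · rw [Set.mem_star] at hx
        simp only [Set.mem_insert_iff, Set.mem_singleton_iff] at hx
        rcases hx with hx | hx
        · have hx' : x = star w₁ := by rw [← hx, star_star]
          subst hx'
          exact ⟨_, e4⟩
        · have hx' : x = star w₂ := by rw [← hx, star_star]
          subst hx'
          exact ⟨-(∑ i, star (psi2 z i) ⊗ₜ[ℂ] psi1 z i), by rw [map_neg, e3, neg_neg]⟩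
    · intro r
      refine ⟨r • ((1 : A) ⊗ₜ[ℂ] (1 : A)), ?_⟩
      rw [map_smul, key, map_one, mul_one, Algebra.algebraMap_eq_smul_one,
        TensorProduct.tmul_smul]
    · rintro x y - - ⟨t, ht⟩ ⟨t', ht'⟩
      exact ⟨t + t', by rw [map_add, ht, ht', ← TensorProduct.tmul_add]⟩
    · rintro x y - - ⟨t, ht⟩ ⟨t', ht'⟩
      refine ⟨twmul t' t, ?_⟩
      rw [L2 t' t x ht, ht', Algebra.TensorProduct.tmul_mul_tmul, one_mul, mul_comm y x]
  intro u
  induction u using TensorProduct.induction_on with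
  | zero => exact ⟨0, map_zero _⟩
  | tmul a h =>
      obtain ⟨t, ht⟩ := hmem h
      refine ⟨twmul (a ⊗ₜ[ℂ] (1 : A)) t, ?_⟩
      rw [L2 _ t h ht, key, map_one, mul_one, Algebra.TensorProduct.tmul_mul_tmul,
        mul_one, one_mul]
  | add u v hu hv =>
      obtain ⟨t, ht⟩ := hu
      obtain ⟨t', ht'⟩ := hv
      exact ⟨t + t', by rw [map_add, ht, ht']⟩
end
end

section
/- Let ω: H → Ω¹_un(P) be a strong connection one-form on a Hopf–Galois extension B ⊂ P with H having invertible antipode, given by ω(h) = ℓ(h) − ε(h) 1⊗1 where ℓ: H → P⊗P satisfies ℓ(1)=1⊗1, χ̄(ℓ(h)) = 1⊗h, (ℓ⊗id)∘Δ = (id⊗Δ_R)∘ℓ and (id⊗ℓ)∘Δ = (Δ_L⊗id)∘ℓ. Then for every p ∈ P, δp + ω(S^{-1}p_{(1)}) p_{(0)} ∈ P·Ω¹_un(B), where δp = 1⊗p − p⊗1. -/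
/-!
Write `Φ(p) = ℓ(S⁻¹p₍₁₎) p₍₀₎`. Since `ω = ℓ - ε(·) 1 ⊗ 1`, the element in question is
`Φ(p) - p ⊗ 1`. Applying `id ⊗ ε` to `χ̄(ℓ(h)) = 1 ⊗ h` shows that `ℓ(h)` multiplies to `ε(h)`,
so `Φ(p)` multiplies to `p`. Right covariance of `ℓ`, together with
`Δ(S⁻¹h) = S⁻¹h₍₂₎ ⊗ S⁻¹h₍₁₎` and `S⁻¹(h₍₂₎) h₍₁₎ = ε(h)`, makes the second leg of `Φ(p)`
coinvariant. As `P` is flat, `P ⊗ B` is the kernel of `id ⊗ (Δ_R - (· ⊗ 1))` on `P ⊗ P`, so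
`Φ(p) = ∑ qᵢ ⊗ bᵢ` with `bᵢ ∈ B`, and then `Φ(p) - p ⊗ 1 = ∑ (qᵢ ⊗ 1)(1 ⊗ bᵢ - bᵢ ⊗ 1)`.
-/

open scoped TensorProduct

section

open TensorProduct Coalgebra HopfAlgebra WithConv

namespace Coalgebra

variable {R H : Type*} [CommSemiring R] [Semiring H] [Algebra R H] [Coalgebra R H]

lemma rTensor_rTensor_comul_comul_of_comp_comul {f : H ⊗[R] H →ₗ[R] H}
    (hf : f ∘ₗ comul = Algebra.linearMap R H ∘ₗ counit) (a : H) :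
    f.rTensor H ((comul (R := R)).rTensor H (comul a)) = 1 ⊗ₜ a := by
  rw [← LinearMap.rTensor_comp_apply, hf, LinearMap.rTensor_comp_apply, rTensor_counit_comul]
  simp

end Coalgebra

namespace HopfAlgebra

variable {R H : Type*} [CommSemiring R] [Semiring H] [HopfAlgebra R H]

lemma mul'_map_antipode_comul_comul (a : H) :
    LinearMap.mul' R (H ⊗[R] H) (map (Algebra.TensorProduct.includeLeft.toLinearMap ∘ₗ antipode R)
      (comul (R := R)) (comul a)) = 1 ⊗ₜ a := by
  have key : ∀ w : H ⊗[R] H,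
      LinearMap.mul' R (H ⊗[R] H) (map (Algebra.TensorProduct.includeLeft.toLinearMap ∘ₗ antipode R)
        (comul (R := R)) w) =
      (LinearMap.mul' R H ∘ₗ (antipode R).rTensor H).rTensor H
        ((TensorProduct.assoc R H H H).symm (comul.lTensor H w)) := by
    intro w
    induction w using TensorProduct.induction_on with
    | zero => simp
    | add x y hx hy => simp only [map_add, hx, hy]
    | tmul u v =>
      simp only [map_tmul, LinearMap.coe_comp, Function.comp_apply, LinearMap.lTensor_tmul]
      induction comul (R := R) v using TensorProduct.induction_on with
      | zero => simp
      | add x y hx hy => simp only [map_add, tmul_add, hx, hy]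
      | tmul x y => simp [Algebra.TensorProduct.tmul_mul_tmul]
  rw [key, coassoc_symm_apply, rTensor_rTensor_comul_comul_of_comp_comul
    (by rw [LinearMap.comp_assoc]; exact mul_antipode_rTensor_comul)]

lemma map_antipode_comp_comm_comul_mul_comul :
    toConv ((map (antipode R) (antipode R) ∘ₗ (TensorProduct.comm R H H).toLinearMap) ∘ₗ
      comul (R := R) (A := H)) * toConv (comul (R := R) (A := H)) = 1 := by
  set E : (H ⊗[R] H) ⊗[R] H →ₗ[R] H ⊗[R] H := LinearMap.mul' R (H ⊗[R] H) ∘ₗ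
    map (map (antipode R) (antipode R) ∘ₗ (TensorProduct.comm R H H).toLinearMap) comul
  have key : ∀ z : H ⊗[R] H, E ((TensorProduct.assoc R H H H).symm (comul.lTensor H z)) =
      1 ⊗ₜ LinearMap.mul' R H ((antipode R).rTensor H z) := by
    intro z
    induction z using TensorProduct.induction_on with
    | zero => simp
    | add x y hx hy => simp only [map_add, tmul_add, hx, hy]
    | tmul u v =>
      have : ∀ w : H ⊗[R] H, E ((TensorProduct.assoc R H H H).symm (u ⊗ₜ w)) =
          (1 ⊗ₜ antipode R u) * LinearMap.mul' R (H ⊗[R] H)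
            (map (Algebra.TensorProduct.includeLeft.toLinearMap ∘ₗ antipode R) comul w) := by
        intro w
        induction w using TensorProduct.induction_on with
        | zero => simp
        | add x y hx hy => simp only [tmul_add, map_add, mul_add, hx, hy]
        | tmul x y => simp [E, ← mul_assoc, Algebra.TensorProduct.tmul_mul_tmul]
      rw [LinearMap.lTensor_tmul, this, mul'_map_antipode_comul_comul]
      simp [Algebra.TensorProduct.tmul_mul_tmul]
  ext a
  have hE : (toConv ((map (antipode R) (antipode R) ∘ₗ (TensorProduct.comm R H H).toLinearMap) ∘ₗ
      comul (R := R) (A := H)) * toConv (comul (R := R) (A := H))) a =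
      E (comul.rTensor H (comul a)) := by
    rw [LinearMap.convMul_apply, ofConv_toConv, ofConv_toConv, ← LinearMap.map_rTensor]; rfl
  rw [hE, ← coassoc_symm_apply, key, mul_antipode_rTensor_comul_apply]
  simp [Algebra.TensorProduct.one_def, Algebra.algebraMap_eq_smul_one]

lemma comul_antipode (a : H) :
    comul (R := R) (antipode R a) =
      map (antipode R) (antipode R) (TensorProduct.comm R H H (comul a)) :=
  (congr($(left_inv_eq_right_inv map_antipode_comp_comm_comul_mul_comul
    (LinearMap.comul_right_inv (R := R) (C := H))) a)).symm

variable {Sinv : H →ₗ[R] H}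

lemma counit_eq_of_rightInverse (hr : Function.RightInverse Sinv (antipode R)) (a : H) :
    counit (R := R) (Sinv a) = counit a := by
  rw [← counit_antipode (R := R) (Sinv a), hr a]

lemma comul_eq_of_leftInverse_of_rightInverse (hl : Function.LeftInverse Sinv (antipode R))
    (hr : Function.RightInverse Sinv (antipode R)) (a : H) :
    comul (R := R) (Sinv a) = TensorProduct.comm R H H (map Sinv Sinv (comul a)) := by
  have hSinvS : Sinv ∘ₗ antipode R = LinearMap.id := LinearMap.ext hl
  conv_rhs => rw [← hr a, comul_antipode, map_map, hSinvS, map_id]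
  simp

lemma mul'_map_comm_comul_of_leftInverse_of_rightInverse
    (hl : Function.LeftInverse Sinv (antipode R)) (hr : Function.RightInverse Sinv (antipode R))
    (a : H) :
    LinearMap.mul' R H (map Sinv LinearMap.id (TensorProduct.comm R H H (comul a))) =
      algebraMap R H (counit a) := by
  have h := mul_antipode_lTensor_comul_apply (R := R) (Sinv a)
  rw [counit_eq_of_rightInverse hr, comul_eq_of_leftInverse_of_rightInverse hl hr] at h
  rw [← h]
  induction comul (R := R) a using TensorProduct.induction_on with
  | zero => simp
  | add x y hx hy => simp only [map_add, hx, hy]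
  | tmul x y => simp [hr x]

end HopfAlgebra

abbrev HopfAlgebra.ofStructureMaps {R H : Type*} [CommSemiring R] [Semiring H] [Algebra R H]
    (comul : H →ₐ[R] H ⊗[R] H) (counit : H →ₐ[R] R) (antipode : H →ₗ[R] H)
    (coassoc : ∀ h : H, TensorProduct.assoc R H H H
        (map comul.toLinearMap LinearMap.id (comul h)) =
      map LinearMap.id comul.toLinearMap (comul h))
    (counit_left : ∀ h : H,
      TensorProduct.lid R H (map counit.toLinearMap LinearMap.id (comul h)) = h)
    (counit_right : ∀ h : H,
      TensorProduct.rid R H (map LinearMap.id counit.toLinearMap (comul h)) = h)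
    (antipode_mul : ∀ h : H,
      LinearMap.mul' R H (map antipode LinearMap.id (comul h)) = algebraMap R H (counit h) ∧
      LinearMap.mul' R H (map LinearMap.id antipode (comul h)) = algebraMap R H (counit h)) :
    HopfAlgebra R H :=
  letI : Bialgebra R H := .ofAlgHom comul counit (AlgHom.ext coassoc)
    (AlgHom.ext fun h => (Algebra.TensorProduct.lid R H).eq_symm_apply.mpr (counit_left h))
    (AlgHom.ext fun h => (Algebra.TensorProduct.rid R R H).eq_symm_apply.mpr (counit_right h))
  { antipode := antipode
    mul_antipode_rTensor_comul := LinearMap.ext fun h => (antipode_mul h).1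
    mul_antipode_lTensor_comul := LinearMap.ext fun h => (antipode_mul h).2 }

section TwistMul

variable {R A B M : Type*} [CommSemiring R] [Semiring A] [Algebra R A] [Semiring B] [Algebra R B]
  [AddCommMonoid M] [Module R M]

/-- Applied to `Δ_R p = p₍₀₎ ⊗ p₍₁₎`, this is `p ↦ f(p₍₁₎) p₍₀₎`. -/
noncomputable def twistMul (f : M →ₗ[R] A ⊗[R] B) : B ⊗[R] M →ₗ[R] A ⊗[R] B :=
  LinearMap.mul' R (A ⊗[R] B) ∘ₗ map f Algebra.TensorProduct.includeRight.toLinearMap ∘ₗ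
    (TensorProduct.comm R B M).toLinearMap

@[simp]
lemma twistMul_tmul (f : M →ₗ[R] A ⊗[R] B) (b : B) (m : M) :
    twistMul f (b ⊗ₜ m) = f m * (1 ⊗ₜ b) := by
  simp [twistMul]

lemma twistMul_sub {R A B M : Type*} [CommRing R] [Ring A] [Algebra R A] [Ring B] [Algebra R B]
    [AddCommGroup M] [Module R M] (f g : M →ₗ[R] A ⊗[R] B) (y : B ⊗[R] M) :
    twistMul (f - g) y = twistMul f y - twistMul g y := by
  induction y using TensorProduct.induction_on with
  | zero => simp
  | add x y hx hy => simp only [map_add, hx, hy]; abel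
  | tmul b m => simp [sub_mul]

lemma lTensor_twistMul {B' : Type*} [Semiring B'] [Algebra R B'] (φ : B →ₐ[R] B')
    (f : M →ₗ[R] A ⊗[R] B) (y : B ⊗[R] M) :
    φ.toLinearMap.lTensor A (twistMul f y) =
      twistMul (φ.toLinearMap.lTensor A ∘ₗ f) (φ.toLinearMap.rTensor M y) := by
  induction y using TensorProduct.induction_on with
  | zero => simp
  | add x y hx hy => simp only [map_add, hx, hy]
  | tmul b m =>
    simp only [twistMul_tmul, LinearMap.rTensor_tmul, LinearMap.coe_comp, Function.comp_apply]
    exact (map_mul (Algebra.TensorProduct.map (AlgHom.id R A) φ) _ _).trans (by simp; rfl)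

end TwistMul

section Coaction

variable {R H P : Type*} [CommSemiring R] [Semiring H] [HopfAlgebra R H] [Semiring P]
  [Algebra R P] (ΔR : P →ₐ[R] P ⊗[R] H)

/-- The lift `χ̄ : P ⊗ P → P ⊗ H` of the canonical map `P ⊗_B P → P ⊗ H`. -/
noncomputable def canonicalMap : P ⊗[R] P →ₗ[R] P ⊗[R] H :=
  LinearMap.mul' R (P ⊗[R] H) ∘ₗ
    map (Algebra.TensorProduct.includeLeft : P →ₐ[R] P ⊗[R] H).toLinearMap LinearMap.id ∘ₗ
    map LinearMap.id ΔR.toLinearMap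

variable {ΔR}

lemma mul'_mul_one_tmul (u : P ⊗[R] P) (a : P) :
    LinearMap.mul' R P (u * (1 ⊗ₜ a)) = LinearMap.mul' R P u * a := by
  induction u using TensorProduct.induction_on with
  | zero => simp
  | add x y hx hy => simp only [add_mul, map_add, hx, hy]
  | tmul x y => simp [Algebra.TensorProduct.tmul_mul_tmul, mul_assoc]

section Counit

variable (hcounit : ∀ p : P,
  TensorProduct.rid R P (map LinearMap.id (counit (R := R)) (ΔR p)) = p)
include hcounit

lemma rid_map_counit_canonicalMap (z : P ⊗[R] P) :
    TensorProduct.rid R P (map LinearMap.id counit (canonicalMap ΔR z)) = LinearMap.mul' R P z := by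
  induction z using TensorProduct.induction_on with
  | zero => simp
  | add x y hx hy => simp only [map_add, hx, hy]
  | tmul p' p =>
    conv_rhs => rw [LinearMap.mul'_apply, ← hcounit p]
    simp only [canonicalMap, LinearMap.coe_comp, Function.comp_apply, map_tmul, LinearMap.id_coe,
      id_eq, AlgHom.toLinearMap_apply, Algebra.TensorProduct.includeLeft_apply]
    induction ΔR p using TensorProduct.induction_on with
    | zero => simp
    | add x y hx hy => simp only [tmul_add, map_add, mul_add, hx, hy]
    | tmul x h => simp [Algebra.TensorProduct.tmul_mul_tmul]

lemma mul'_eq_algebraMap_counit_of_canonicalMap_eq {z : P ⊗[R] P} {h : H}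
    (hz : canonicalMap ΔR z = 1 ⊗ₜ h) :
    LinearMap.mul' R P z = algebraMap R P (counit h) := by
  rw [← rid_map_counit_canonicalMap hcounit, hz]
  simp [Algebra.algebraMap_eq_smul_one]

lemma mul'_twistMul_coaction {f : H →ₗ[R] P ⊗[R] P}
    (hf : ∀ h, LinearMap.mul' R P (f h) = algebraMap R P (counit h)) (p : P) :
    LinearMap.mul' R P (twistMul f (ΔR p)) = p := by
  conv_rhs => rw [← hcounit p]
  induction ΔR p using TensorProduct.induction_on with
  | zero => simp
  | add x y hx hy => simp only [map_add, hx, hy]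
  | tmul a h => simp [mul'_mul_one_tmul, hf, Algebra.smul_def]

lemma twistMul_smulRight_counit_coaction (p : P) :
    twistMul (counit.smulRight ((1 : P) ⊗ₜ[R] (1 : P))) (ΔR p) = 1 ⊗ₜ p := by
  conv_rhs => rw [← hcounit p]
  induction ΔR p using TensorProduct.induction_on with
  | zero => simp
  | add x y hx hy => simp only [map_add, tmul_add, hx, hy]
  | tmul a h => simp [Algebra.TensorProduct.tmul_mul_tmul, TensorProduct.smul_tmul']

end Counit

end Coaction

section Covariance

variable {R H P : Type*} [CommSemiring R] [Semiring H] [HopfAlgebra R H] [Semiring P]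
  [Algebra R P] {ΔR : P →ₐ[R] P ⊗[R] H} {Sinv : H →ₗ[R] H} {ℓ : H →ₗ[R] P ⊗[R] P}
  (hl : Function.LeftInverse Sinv (antipode R)) (hr : Function.RightInverse Sinv (antipode R))
  (hℓ : ∀ h : H, TensorProduct.assoc R P P H (map ℓ LinearMap.id (comul h)) =
    map LinearMap.id ΔR.toLinearMap (ℓ h))
include hl hr hℓ

lemma lTensor_coaction_apply_inv (h : H) :
    ΔR.toLinearMap.lTensor P (ℓ (Sinv h)) =
      TensorProduct.assoc R P P H (map (ℓ ∘ₗ Sinv) Sinv (TensorProduct.comm R H H (comul h))) := by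
  rw [LinearMap.lTensor, ← hℓ, comul_eq_of_leftInverse_of_rightInverse hl hr]
  induction comul (R := R) h using TensorProduct.induction_on with
  | zero => simp
  | add x y hx hy => simp only [map_add, hx, hy]
  | tmul x y => simp

lemma twistMul_assoc_symm_tmul_comul (a : P) (g : H) :
    twistMul (ΔR.toLinearMap.lTensor P ∘ₗ ℓ ∘ₗ Sinv)
        ((TensorProduct.assoc R P H H).symm (a ⊗ₜ comul g)) =
      ((TensorProduct.mk R P H).flip 1).lTensor P (ℓ (Sinv g) * (1 ⊗ₜ a)) := by
  set L : H →ₗ[R] P ⊗[R] P := LinearMap.mulRight R (1 ⊗ₜ a) ∘ₗ ℓ ∘ₗ Sinv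
  set σ : H ⊗[R] H →ₗ[R] H :=
    LinearMap.mul' R H ∘ₗ map Sinv LinearMap.id ∘ₗ (TensorProduct.comm R H H).toLinearMap
  set Z : H ⊗[R] H →ₗ[R] P ⊗[R] (P ⊗[R] H) := (TensorProduct.assoc R P P H).toLinearMap ∘ₗ
    map L LinearMap.id ∘ₗ (TensorProduct.comm R H H).toLinearMap
  have assoc_mul : ∀ (u : P ⊗[R] P) (x y : H), TensorProduct.assoc R P P H (u ⊗ₜ x) *
      (1 ⊗ₜ (a ⊗ₜ y)) = TensorProduct.assoc R P P H ((u * (1 ⊗ₜ a)) ⊗ₜ (x * y)) := by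
    intro u x y
    induction u using TensorProduct.induction_on with
    | zero => simp
    | add u v hu hv => simp only [add_tmul, map_add, add_mul, hu, hv]
    | tmul p q => simp [Algebra.TensorProduct.tmul_mul_tmul]
  -- coassociativity puts `S⁻¹` next to the leg it cancels: `S⁻¹(g₍₂₎) g₍₁₎ ⊗ g₍₃₎ = 1 ⊗ g`
  have key : ∀ w : H ⊗[R] H,
      twistMul (ΔR.toLinearMap.lTensor P ∘ₗ ℓ ∘ₗ Sinv)
          ((TensorProduct.assoc R P H H).symm (a ⊗ₜ w)) =
        Z (σ.rTensor H ((TensorProduct.assoc R H H H).symm ((comul (R := R)).lTensor H w))) := by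
    intro w
    induction w using TensorProduct.induction_on with
    | zero => simp
    | add x y hx hy => simp only [tmul_add, map_add, hx, hy]
    | tmul x y =>
      simp only [assoc_symm_tmul, twistMul_tmul, LinearMap.coe_comp, Function.comp_apply,
        lTensor_coaction_apply_inv hl hr hℓ, LinearMap.lTensor_tmul]
      induction comul (R := R) y using TensorProduct.induction_on with
      | zero => simp
      | add u v hu hv => simp only [map_add, tmul_add, add_mul, hu, hv]
      | tmul y₁ y₂ => simp [assoc_mul, Z, L, σ]
  have hσ : σ ∘ₗ comul = Algebra.linearMap R H ∘ₗ counit :=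
    LinearMap.ext (mul'_map_comm_comul_of_leftInverse_of_rightInverse hl hr)
  rw [key, coassoc_symm_apply, rTensor_rTensor_comul_comul_of_comp_comul hσ]
  simp only [Z, L, LinearMap.coe_comp, Function.comp_apply, LinearEquiv.coe_coe, comm_tmul,
    map_tmul, LinearMap.mulRight_apply, LinearMap.id_coe, id_eq]
  induction ℓ (Sinv g) * (1 ⊗ₜ a) using TensorProduct.induction_on with
  | zero => simp
  | add u v hu hv => simp only [add_tmul, map_add, hu, hv]
  | tmul p q => simp

lemma lTensor_coaction_twistMul_coaction
    (hcoassoc : ∀ p : P, TensorProduct.assoc R P H H (map ΔR.toLinearMap LinearMap.id (ΔR p)) =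
      map LinearMap.id (comul (R := R)) (ΔR p)) (p : P) :
    ΔR.toLinearMap.lTensor P (twistMul (ℓ ∘ₗ Sinv) (ΔR p)) =
      ((TensorProduct.mk R P H).flip 1).lTensor P (twistMul (ℓ ∘ₗ Sinv) (ΔR p)) := by
  have hΔR : ΔR.toLinearMap.rTensor H (ΔR p) =
      (TensorProduct.assoc R P H H).symm ((comul (R := R)).lTensor P (ΔR p)) :=
    (LinearEquiv.eq_symm_apply _).mpr (hcoassoc p)
  rw [lTensor_twistMul, hΔR]
  induction ΔR p using TensorProduct.induction_on with
  | zero => simp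
  | add x y hx hy => simp only [map_add, hx, hy]
  | tmul a g =>
    rw [LinearMap.lTensor_tmul, twistMul_assoc_symm_tmul_comul hl hr hℓ, twistMul_tmul,
      LinearMap.comp_apply]

end Covariance

lemma sub_mul'_tmul_one_mem_span {R H P : Type*} [CommRing R] [Semiring H] [Algebra R H]
    [Ring P] [Algebra R P] [Module.Flat R P] {ΔR : P →ₗ[R] P ⊗[R] H} {x : P ⊗[R] P}
    (hx : ΔR.lTensor P x = ((TensorProduct.mk R P H).flip 1).lTensor P x) :
    x - LinearMap.mul' R P x ⊗ₜ 1 ∈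
      Submodule.span R {y | ∃ q b : P, ΔR b = b ⊗ₜ 1 ∧ y = q ⊗ₜ b - (q * b) ⊗ₜ 1} := by
  set D := ΔR - (TensorProduct.mk R P H).flip 1
  have hD : D.lTensor P x = 0 := by simp [D, LinearMap.lTensor_sub, hx]
  obtain ⟨y, rfl⟩ := (Module.Flat.lTensor_exact P (LinearMap.exact_subtype_ker_map D) x).mp hD
  clear hx hD
  induction y using TensorProduct.induction_on with
  | zero => simp
  | add y z hy hz =>
    convert add_mem hy hz using 1
    simp only [map_add, add_tmul]
    abel
  | tmul q b =>
    refine Submodule.subset_span ⟨q, b, ?_, by simp⟩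
    exact sub_eq_zero.mp (LinearMap.mem_ker.mp b.2)

end

theorem stmt15_general (H : Type) [Ring H] [Algebra ℂ H]
    (P : Type) [Ring P] [Algebra ℂ P]
    -- Hopf algebra structure on H
    (comul : H →ₐ[ℂ] H ⊗[ℂ] H) (counit : H →ₐ[ℂ] ℂ) (Santi Sinv : H →ₗ[ℂ] H)
    (hS : ∀ h : H, Santi (Sinv h) = h ∧ Sinv (Santi h) = h)
    (hcoassoc : ∀ h : H, (TensorProduct.assoc ℂ H H H)
        ((TensorProduct.map comul.toLinearMap LinearMap.id) (comul h)) =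
      (TensorProduct.map LinearMap.id comul.toLinearMap) (comul h))
    (hcounitL : ∀ h : H, (TensorProduct.lid ℂ H)
        ((TensorProduct.map counit.toLinearMap LinearMap.id) (comul h)) = h)
    (hcounitR : ∀ h : H, (TensorProduct.rid ℂ H)
        ((TensorProduct.map LinearMap.id counit.toLinearMap) (comul h)) = h)
    (hantipode : ∀ h : H,
      (LinearMap.mul' ℂ H) ((TensorProduct.map Santi LinearMap.id) (comul h)) =
        algebraMap ℂ H (counit h) ∧
      (LinearMap.mul' ℂ H) ((TensorProduct.map LinearMap.id Santi) (comul h)) =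
        algebraMap ℂ H (counit h))
    -- the comodule-algebra structure on P
    (ΔR : P →ₐ[ℂ] P ⊗[ℂ] H)
    (hcoassocP : ∀ p : P, (TensorProduct.assoc ℂ P H H)
        ((TensorProduct.map ΔR.toLinearMap LinearMap.id) (ΔR p)) =
      (TensorProduct.map LinearMap.id comul.toLinearMap) (ΔR p))
    (hcounitP : ∀ p : P,
      (TensorProduct.rid ℂ P) ((TensorProduct.map LinearMap.id counit.toLinearMap) (ΔR p)) = p)
    -- the coinvariant subalgebra B
    (Bset : Set P) (hBset : Bset = {b : P | ΔR b = b ⊗ₜ[ℂ] 1})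
    -- the (lifted) canonical map and the Hopf–Galois condition
    (χbar : P ⊗[ℂ] P →ₗ[ℂ] P ⊗[ℂ] H)
    (hχbar : χbar =
      (LinearMap.mul' ℂ (P ⊗[ℂ] H)) ∘ₗ
      (TensorProduct.map (Algebra.TensorProduct.includeLeft :
          P →ₐ[ℂ] P ⊗[ℂ] H).toLinearMap LinearMap.id) ∘ₗ
      (TensorProduct.map LinearMap.id ΔR.toLinearMap))
    -- the strong connection data ℓ and its properties
    (ℓ : H →ₗ[ℂ] P ⊗[ℂ] P)
    (hℓχ : ∀ h : H, χbar (ℓ h) = 1 ⊗ₜ[ℂ] h)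
    (hℓR : ∀ h : H, (TensorProduct.assoc ℂ P P H)
        ((TensorProduct.map ℓ LinearMap.id) (comul h)) =
      (TensorProduct.map LinearMap.id ΔR.toLinearMap) (ℓ h))
    -- the connection one-form ω(h) = ℓ(h) − ε(h) 1⊗1
    (ω : H →ₗ[ℂ] P ⊗[ℂ] P)
    (hω : ω = ℓ - (counit.toLinearMap.smulRight ((1 : P) ⊗ₜ[ℂ] (1 : P))))
    -- the map p ↦ ω(S⁻¹p_{(1)}) p_{(0)}
    (Ψ : P →ₗ[ℂ] P ⊗[ℂ] P)
    (hΨ : Ψ = (LinearMap.mul' ℂ (P ⊗[ℂ] P)) ∘ₗ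
      (TensorProduct.map (ω ∘ₗ Sinv)
        (Algebra.TensorProduct.includeRight : P →ₐ[ℂ] P ⊗[ℂ] P).toLinearMap) ∘ₗ
      (TensorProduct.comm ℂ P H).toLinearMap ∘ₗ ΔR.toLinearMap) :
    ∀ p : P,
      ((1 : P) ⊗ₜ[ℂ] p - p ⊗ₜ[ℂ] (1 : P)) + Ψ p ∈
        Submodule.span ℂ {x : P ⊗[ℂ] P | ∃ q : P, ∃ b b' : P, b ∈ Bset ∧ b' ∈ Bset ∧
          x = (q ⊗ₜ[ℂ] (1 : P)) * (b ⊗ₜ[ℂ] b' - (b * b') ⊗ₜ[ℂ] (1 : P))} := by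
  intro p
  let _ : HopfAlgebra ℂ H :=
    .ofStructureMaps comul counit Santi hcoassoc hcounitL hcounitR hantipode
  have hl : Function.LeftInverse Sinv (HopfAlgebra.antipode ℂ) := fun h => (hS h).2
  have hr : Function.RightInverse Sinv (HopfAlgebra.antipode ℂ) := fun h => (hS h).1
  set Φ := twistMul (ℓ ∘ₗ Sinv) (ΔR p)
  have hΨp : Ψ p = Φ - 1 ⊗ₜ p := by
    have hε : counit.toLinearMap.smulRight ((1 : P) ⊗ₜ[ℂ] (1 : P)) ∘ₗ Sinv =
        (Coalgebra.counit (R := ℂ) (A := H)).smulRight ((1 : P) ⊗ₜ[ℂ] (1 : P)) := by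
      ext h
      exact congrArg (· • ((1 : P) ⊗ₜ[ℂ] (1 : P))) (HopfAlgebra.counit_eq_of_rightInverse hr h)
    rw [hΨ, hω, LinearMap.sub_comp, hε, ← twistMul_smulRight_counit_coaction hcounitP p,
      ← twistMul_sub]
    rfl
  have hmul : LinearMap.mul' ℂ P Φ = p := by
    refine mul'_twistMul_coaction hcounitP (fun h => ?_) p
    rw [LinearMap.comp_apply, ← HopfAlgebra.counit_eq_of_rightInverse hr h]
    exact mul'_eq_algebraMap_counit_of_canonicalMap_eq hcounitP (by rw [← hℓχ, hχbar]; rfl)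
  have hmem := sub_mul'_tmul_one_mem_span (lTensor_coaction_twistMul_coaction hl hr hℓR hcoassocP p)
  rw [hmul] at hmem
  rw [hΨp, show 1 ⊗ₜ[ℂ] p - p ⊗ₜ[ℂ] 1 + (Φ - 1 ⊗ₜ[ℂ] p) = Φ - p ⊗ₜ[ℂ] 1 by abel]
  refine Submodule.span_mono ?_ hmem
  rintro _ ⟨q, b, hb, rfl⟩
  refine ⟨q, 1, b, by rw [hBset]; exact map_one ΔR, hBset ▸ hb, ?_⟩
  simp [mul_sub, Algebra.TensorProduct.tmul_mul_tmul]

/-- For a strong connection one-form ω(h) = ℓ(h) − ε(h)1⊗1 on a Hopf–Galois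
extension B ⊂ P with H having invertible antipode, for every p ∈ P one has
δp + ω(S⁻¹p_{(1)}) p_{(0)} ∈ P·Ω¹_un(B), where δp = 1⊗p − p⊗1. -/
theorem stmt15 (H : Type) [Ring H] [Algebra ℂ H]
    (P : Type) [Ring P] [Algebra ℂ P]
    -- Hopf algebra structure on H
    (comul : H →ₐ[ℂ] H ⊗[ℂ] H) (counit : H →ₐ[ℂ] ℂ) (Santi Sinv : H →ₗ[ℂ] H)
    (hS : ∀ h : H, Santi (Sinv h) = h ∧ Sinv (Santi h) = h)
    (hcoassoc : ∀ h : H, (TensorProduct.assoc ℂ H H H)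
        ((TensorProduct.map comul.toLinearMap LinearMap.id) (comul h)) =
      (TensorProduct.map LinearMap.id comul.toLinearMap) (comul h))
    (hcounitL : ∀ h : H, (TensorProduct.lid ℂ H)
        ((TensorProduct.map counit.toLinearMap LinearMap.id) (comul h)) = h)
    (hcounitR : ∀ h : H, (TensorProduct.rid ℂ H)
        ((TensorProduct.map LinearMap.id counit.toLinearMap) (comul h)) = h)
    (hantipode : ∀ h : H,
      (LinearMap.mul' ℂ H) ((TensorProduct.map Santi LinearMap.id) (comul h)) =
        algebraMap ℂ H (counit h) ∧
      (LinearMap.mul' ℂ H) ((TensorProduct.map LinearMap.id Santi) (comul h)) =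
        algebraMap ℂ H (counit h))
    -- the comodule-algebra structure on P
    (ΔR : P →ₐ[ℂ] P ⊗[ℂ] H)
    (hcoassocP : ∀ p : P, (TensorProduct.assoc ℂ P H H)
        ((TensorProduct.map ΔR.toLinearMap LinearMap.id) (ΔR p)) =
      (TensorProduct.map LinearMap.id comul.toLinearMap) (ΔR p))
    (hcounitP : ∀ p : P,
      (TensorProduct.rid ℂ P) ((TensorProduct.map LinearMap.id counit.toLinearMap) (ΔR p)) = p)
    -- the coinvariant subalgebra B
    (Bset : Set P) (hBset : Bset = {b : P | ΔR b = b ⊗ₜ[ℂ] 1})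
    -- the (lifted) canonical map and the Hopf–Galois condition
    (χbar : P ⊗[ℂ] P →ₗ[ℂ] P ⊗[ℂ] H)
    (hχbar : χbar =
      (LinearMap.mul' ℂ (P ⊗[ℂ] H)) ∘ₗ
      (TensorProduct.map (Algebra.TensorProduct.includeLeft :
          P →ₐ[ℂ] P ⊗[ℂ] H).toLinearMap LinearMap.id) ∘ₗ
      (TensorProduct.map LinearMap.id ΔR.toLinearMap))
    (hGaloisSurj : Function.Surjective χbar)
    (hGaloisKer : LinearMap.ker χbar = Submodule.span ℂ
      {x : P ⊗[ℂ] P | ∃ p p' b : P, b ∈ Bset ∧ x = (p * b) ⊗ₜ[ℂ] p' - p ⊗ₜ[ℂ] (b * p')})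
    -- the strong connection data ℓ and its properties
    (ℓ : H →ₗ[ℂ] P ⊗[ℂ] P)
    (hℓone : ℓ 1 = (1 : P) ⊗ₜ[ℂ] (1 : P))
    (hℓχ : ∀ h : H, χbar (ℓ h) = 1 ⊗ₜ[ℂ] h)
    (hℓR : ∀ h : H, (TensorProduct.assoc ℂ P P H)
        ((TensorProduct.map ℓ LinearMap.id) (comul h)) =
      (TensorProduct.map LinearMap.id ΔR.toLinearMap) (ℓ h))
    (ΔL : P →ₗ[ℂ] H ⊗[ℂ] P)
    (hΔL : ΔL = (TensorProduct.map Sinv LinearMap.id) ∘ₗ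
      (TensorProduct.comm ℂ P H).toLinearMap ∘ₗ ΔR.toLinearMap)
    (hℓL : ∀ h : H, (TensorProduct.assoc ℂ H P P)
        ((TensorProduct.map ΔL LinearMap.id) (ℓ h)) =
      (TensorProduct.map LinearMap.id ℓ) (comul h))
    -- the connection one-form ω(h) = ℓ(h) − ε(h) 1⊗1
    (ω : H →ₗ[ℂ] P ⊗[ℂ] P)
    (hω : ω = ℓ - (counit.toLinearMap.smulRight ((1 : P) ⊗ₜ[ℂ] (1 : P))))
    -- the map p ↦ ω(S⁻¹p_{(1)}) p_{(0)}
    (Ψ : P →ₗ[ℂ] P ⊗[ℂ] P)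
    (hΨ : Ψ = (LinearMap.mul' ℂ (P ⊗[ℂ] P)) ∘ₗ
      (TensorProduct.map (ω ∘ₗ Sinv)
        (Algebra.TensorProduct.includeRight : P →ₐ[ℂ] P ⊗[ℂ] P).toLinearMap) ∘ₗ
      (TensorProduct.comm ℂ P H).toLinearMap ∘ₗ ΔR.toLinearMap) :
    ∀ p : P,
      ((1 : P) ⊗ₜ[ℂ] p - p ⊗ₜ[ℂ] (1 : P)) + Ψ p ∈
        Submodule.span ℂ {x : P ⊗[ℂ] P | ∃ q : P, ∃ b b' : P, b ∈ Bset ∧ b' ∈ Bset ∧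
          x = (q ⊗ₜ[ℂ] (1 : P)) * (b ⊗ₜ[ℂ] b' - (b * b') ⊗ₜ[ℂ] (1 : P))} :=
  stmt15_general H P comul counit Santi Sinv hS hcoassoc hcounitL hcounitR hantipode ΔR hcoassocP
    hcounitP Bset hBset χbar hχbar ℓ hℓχ hℓR ω hω Ψ hΨ
end
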